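/- arXiv:1808.09462 — 7 statements merged into one kernel-verified Lean document; each statement's English description precedes it below -/
import Mathlib

section
/- Let p ∈ [1,∞) and let M be a Hermitian s×s complex matrix with positive part M₊ := M + M₋ and negative part M₋ := f₁(M). Then M₊ is positive semidefinite, it is a closest point to M in the positive semidefinite cone with respect to the normalized Schatten p-norm, and d_p(M) = ‖M − M₊‖_p = ‖M₋‖_p = (tr(f_p(M)))^{1/p}. -/
/-!
The positive and negative parts are functions of `M`, so their eigenvalues are `max λᵢ 0` and
`f₁(λᵢ)`; this gives positivity of `M₊` and all the norm identities. For minimality take `N ⪰ 0`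
and let `μ` be the eigenvalues of `M - N`. In an eigenbasis `(uᵢ)` of `M`, the `i`-th diagonal
entry of `M - N` is `λᵢ - ⟨uᵢ, N uᵢ⟩ ≤ λᵢ`, and also `∑ⱼ cᵢⱼ μⱼ` for the doubly stochastic matrix
`cᵢⱼ = |⟨uᵢ, vⱼ⟩|²`, `(vⱼ)` an eigenbasis of `M - N`. As `f_p` is decreasing and convex,
`f_p(λᵢ) ≤ ∑ⱼ cᵢⱼ |μⱼ|^p`, and summing over `i` gives `tr f_p(M) ≤ ‖M - N‖_p^p`.
-/

open scoped ComplexOrder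

noncomputable section

/-- The negative part function `f_p` for a natural exponent `p`:
`f_p(x) = |x|^p` for `x < 0` and `0` otherwise. -/
def negPart (p : ℕ) (x : ℝ) : ℝ := if x < 0 then |x| ^ p else 0

/-- The normalized trace of `f(M)` for a Hermitian matrix `M`, defined spectrally:
`tr(f(M)) = s⁻¹ ∑ᵢ f(λᵢ)`. -/
def trFun {s : ℕ} {M : Matrix (Fin s) (Fin s) ℂ} (hM : M.IsHermitian)
    (f : ℝ → ℝ) : ℝ := (s : ℝ)⁻¹ * ∑ i, f (hM.eigenvalues i)

/-- The normalized Schatten p-norm of a Hermitian matrix: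
`‖M‖_p = (s⁻¹ ∑ᵢ |λᵢ|^p)^(1/p)`. -/
def schattenNorm {s : ℕ} (p : ℝ) {M : Matrix (Fin s) (Fin s) ℂ}
    (hM : M.IsHermitian) : ℝ :=
  ((s : ℝ)⁻¹ * ∑ i, |hM.eigenvalues i| ^ p) ^ (1 / p)

/-- The distance of a Hermitian matrix to the psd cone in normalized Schatten p-norm. -/
def distPSD {s : ℕ} (p : ℝ) {M : Matrix (Fin s) (Fin s) ℂ}
    (hM : M.IsHermitian) : ℝ :=
  sInf { r : ℝ | ∃ (N : Matrix (Fin s) (Fin s) ℂ) (hN : N.PosSemidef),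
    r = schattenNorm p (hM.sub hN.isHermitian) }

/-- The negative part function for a real exponent `p`. -/
def negPartR (p : ℝ) (x : ℝ) : ℝ := if x < 0 then |x| ^ p else 0

/-- A real function applied to a Hermitian matrix via its spectral decomposition. -/
def matFun {s : ℕ} {M : Matrix (Fin s) (Fin s) ℂ} (hM : M.IsHermitian)
    (f : ℝ → ℝ) : Matrix (Fin s) (Fin s) ℂ :=
  (hM.eigenvectorUnitary : Matrix (Fin s) (Fin s) ℂ) *
    Matrix.diagonal (fun i => (f (hM.eigenvalues i) : ℂ)) *
    star (hM.eigenvectorUnitary : Matrix (Fin s) (Fin s) ℂ)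

lemma negPartR_nonneg (p x : ℝ) : 0 ≤ negPartR p x := by
  unfold negPartR
  split_ifs
  exacts [by positivity, le_rfl]

lemma add_negPartR_one_nonneg (x : ℝ) : 0 ≤ x + negPartR 1 x := by
  unfold negPartR
  split_ifs with hx
  · rw [Real.rpow_one, abs_of_neg hx, add_neg_cancel]
  · linarith

lemma abs_negPartR_one_rpow {p : ℝ} (hp : p ≠ 0) (x : ℝ) :
    |negPartR 1 x| ^ p = negPartR p x := by
  unfold negPartR
  split_ifs
  · rw [Real.rpow_one, abs_abs]
  · rw [abs_zero, Real.zero_rpow hp]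

lemma negPartR_le_sum_mul_abs_rpow {ι : Type*} [Fintype ι] {p : ℝ} (hp : 1 ≤ p)
    {w μ : ι → ℝ} (hw₀ : ∀ j, 0 ≤ w j) (hw₁ : ∑ j, w j = 1) {x : ℝ}
    (hx : ∑ j, w j * μ j ≤ x) : negPartR p x ≤ ∑ j, w j * |μ j| ^ p := by
  unfold negPartR
  split_ifs with hx₀
  · have hle : |x| ≤ ∑ j, w j * |μ j| := by
      rw [abs_of_neg hx₀, ← neg_le_neg_iff, neg_neg]
      refine le_trans ?_ hx
      rw [← Finset.sum_neg_distrib]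
      exact Finset.sum_le_sum fun j _ => by
        nlinarith [hw₀ j, neg_abs_le (μ j)]
    calc |x| ^ p ≤ (∑ j, w j * |μ j|) ^ p :=
          Real.rpow_le_rpow (abs_nonneg x) hle (by linarith)
      _ ≤ ∑ j, w j * |μ j| ^ p :=
          Real.rpow_arith_mean_le_arith_mean_rpow _ _ _ (fun j _ => hw₀ j) hw₁
            (fun j _ => abs_nonneg _) hp
  · exact Finset.sum_nonneg fun j _ => mul_nonneg (hw₀ j) (by positivity)

open Matrix in
lemma sum_negPartR_le_of_mulVec_le {n : Type*} [Fintype n] [DecidableEq n] {p : ℝ}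
    (hp : 1 ≤ p) {c : Matrix n n ℝ} (hc : c ∈ doublyStochastic ℝ n) {μ ν : n → ℝ}
    (h : c *ᵥ μ ≤ ν) : ∑ i, negPartR p (ν i) ≤ ∑ j, |μ j| ^ p :=
  calc ∑ i, negPartR p (ν i) ≤ ∑ i, ∑ j, c i j * |μ j| ^ p :=
        Finset.sum_le_sum fun i _ => negPartR_le_sum_mul_abs_rpow hp
          (fun j => nonneg_of_mem_doublyStochastic hc) (sum_row_of_mem_doublyStochastic hc i) (h i)
    _ = ∑ j, |μ j| ^ p := by
        rw [Finset.sum_comm]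
        simp_rw [← Finset.sum_mul, sum_col_of_mem_doublyStochastic hc, one_mul]

namespace Matrix

variable {n 𝕜 : Type*} [Fintype n] [DecidableEq n] [RCLike 𝕜]

lemma of_norm_sq_mem_doublyStochastic {W : Matrix n n 𝕜} (hW : W ∈ unitaryGroup n 𝕜) :
    of (fun i j => ‖W i j‖ ^ 2) ∈ doublyStochastic ℝ n := by
  refine mem_doublyStochastic_iff_sum.2 ⟨fun i j => sq_nonneg _, fun i => ?_, fun j => ?_⟩
  · have h := congr_fun₂ (mem_unitaryGroup_iff.1 hW) i i
    simp only [mul_apply, star_apply, RCLike.star_def, RCLike.mul_conj, one_apply_eq] at h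
    exact_mod_cast h
  · have h := congr_fun₂ (mem_unitaryGroup_iff'.1 hW) j j
    simp only [mul_apply, star_apply, RCLike.star_def, RCLike.conj_mul, one_apply_eq] at h
    exact_mod_cast h

lemma re_mul_diagonal_mul_star_apply_self (W : Matrix n n 𝕜) (μ : n → ℝ) (i : n) :
    RCLike.re ((W * diagonal (RCLike.ofReal ∘ μ) * star W : Matrix n n 𝕜) i i) =
      (of (fun i j => ‖W i j‖ ^ 2) *ᵥ μ) i := by
  rw [mul_apply]
  simp only [mul_diagonal, star_apply, RCLike.star_def, Function.comp_apply, mulVec, dotProduct,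
    of_apply, map_sum]
  refine Finset.sum_congr rfl fun j _ => ?_
  rw [mul_right_comm, RCLike.mul_conj]
  norm_cast

end Matrix

namespace Matrix.IsHermitian

open Polynomial

variable {n 𝕜 : Type*} [Fintype n] [DecidableEq n] [RCLike 𝕜]

lemma map_eigenvalues_cfc {A : Matrix n n 𝕜} (hA : A.IsHermitian) (f : ℝ → ℝ)
    (hB : (cfc f A).IsHermitian) :
    Finset.univ.val.map hB.eigenvalues = Finset.univ.val.map (f ∘ hA.eigenvalues) := by
  apply Multiset.map_injective (RCLike.ofReal_injective (K := 𝕜))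
  rw [Multiset.map_map, Multiset.map_map, ← hB.roots_charpoly_eq_eigenvalues,
    hA.charpoly_cfc_eq, roots_prod]
  · simp
  · simp [Finset.prod_ne_zero_iff, X_sub_C_ne_zero]

lemma sum_comp_eigenvalues_of_eq_cfc {A B : Matrix n n 𝕜} (hA : A.IsHermitian)
    (hB : B.IsHermitian) {f : ℝ → ℝ} (hBA : B = cfc f A) (g : ℝ → ℝ) :
    ∑ i, g (hB.eigenvalues i) = ∑ i, g (f (hA.eigenvalues i)) := by
  subst hBA
  have h := congrArg (fun m => (m.map g).sum) (map_eigenvalues_cfc hA f hB)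
  simp only [Multiset.map_map] at h
  exact h

lemma star_eigenvectorUnitary_mul_mul_eigenvectorUnitary {A : Matrix n n 𝕜}
    (hA : A.IsHermitian) :
    (star hA.eigenvectorUnitary : Matrix n n 𝕜) * A * (hA.eigenvectorUnitary : Matrix n n 𝕜) =
      diagonal (RCLike.ofReal ∘ hA.eigenvalues) := by
  simpa only [Unitary.conjStarAlgAut_star_apply] using hA.conjStarAlgAut_star_eigenvectorUnitary

lemma sum_negPartR_eigenvalues_le {p : ℝ} (hp : 1 ≤ p) {A N : Matrix n n 𝕜}
    (hA : A.IsHermitian) (hN : N.PosSemidef) (hAN : (A - N).IsHermitian) :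
    ∑ i, negPartR p (hA.eigenvalues i) ≤ ∑ j, |hAN.eigenvalues j| ^ p := by
  set U : Matrix n n 𝕜 := (hA.eigenvectorUnitary : Matrix n n 𝕜)
  set W : Matrix n n 𝕜 := star U * (hAN.eigenvectorUnitary : Matrix n n 𝕜)
  have hW : W ∈ unitaryGroup n 𝕜 :=
    Submonoid.mul_mem _ (Unitary.star_mem hA.eigenvectorUnitary.2) hAN.eigenvectorUnitary.2
  refine sum_negPartR_le_of_mulVec_le hp (of_norm_sq_mem_doublyStochastic hW) fun i => ?_
  have hU : star U * A * U = diagonal (RCLike.ofReal ∘ hA.eigenvalues) :=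
    hA.star_eigenvectorUnitary_mul_mul_eigenvectorUnitary
  have hconj : W * diagonal (RCLike.ofReal ∘ hAN.eigenvalues) * star W =
      diagonal (RCLike.ofReal ∘ hA.eigenvalues) - star U * N * U := by
    rw [← hU, ← sub_mul, ← mul_sub]
    conv_rhs => rw [hAN.spectral_theorem, Unitary.conjStarAlgAut_apply]
    simp only [W, star_mul, star_star, mul_assoc]
  have hdiag : 0 ≤ RCLike.re ((star U * N * U) i i) :=
    RCLike.nonneg_iff.1 ((hN.conjTranspose_mul_mul_same U).diag_nonneg) |>.1
  rw [← re_mul_diagonal_mul_star_apply_self, hconj, sub_apply, diagonal_apply_eq, map_sub,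
    Function.comp_apply, RCLike.ofReal_re]
  linarith

end Matrix.IsHermitian

open scoped MatrixOrder

lemma matFun_eq_cfc {s : ℕ} {M : Matrix (Fin s) (Fin s) ℂ} (hM : M.IsHermitian) (f : ℝ → ℝ) :
    matFun hM f = cfc f M := by
  rw [hM.cfc_eq]
  rfl

lemma schattenNorm_eq_of_eq_cfc {s : ℕ} (p : ℝ) {M B : Matrix (Fin s) (Fin s) ℂ}
    (hM : M.IsHermitian) (hB : B.IsHermitian) {f : ℝ → ℝ} (hBM : B = cfc f M) :
    schattenNorm p hB = trFun hM (fun x => |f x| ^ p) ^ (1 / p) := by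
  rw [schattenNorm, trFun, hM.sum_comp_eigenvalues_of_eq_cfc hB hBM (|·| ^ p)]

lemma trFun_negPartR_rpow_le_schattenNorm_sub {s : ℕ} {p : ℝ} (hp : 1 ≤ p)
    {M N : Matrix (Fin s) (Fin s) ℂ} (hM : M.IsHermitian) (hN : N.PosSemidef)
    (hMN : (M - N).IsHermitian) :
    trFun hM (negPartR p) ^ (1 / p) ≤ schattenNorm p hMN :=
  Real.rpow_le_rpow (mul_nonneg (by positivity) (Finset.sum_nonneg fun i _ => negPartR_nonneg _ _))
    (mul_le_mul_of_nonneg_left (hM.sum_negPartR_eigenvalues_le hp hN hMN) (by positivity))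
    (by positivity)

/-- `M₊ = M + M₋` is psd, it is a closest psd matrix to `M` in
normalized Schatten p-norm, and `d_p(M) = ‖M - M₊‖_p = ‖M₋‖_p = tr(f_p(M))^(1/p)`. -/
theorem statement0 (s : ℕ) (p : ℝ) (hp : 1 ≤ p) (M : Matrix (Fin s) (Fin s) ℂ)
    (hM : M.IsHermitian) :
    (M + matFun hM (negPartR 1)).PosSemidef ∧
    ∃ (hneg : (matFun hM (negPartR 1)).IsHermitian)
      (hsub : (M - (M + matFun hM (negPartR 1))).IsHermitian),
      (∀ (N : Matrix (Fin s) (Fin s) ℂ) (hN : N.PosSemidef),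
        schattenNorm p hsub ≤ schattenNorm p (hM.sub hN.isHermitian)) ∧
      distPSD p hM = schattenNorm p hsub ∧
      schattenNorm p hsub = schattenNorm p hneg ∧
      schattenNorm p hneg = trFun hM (negPartR p) ^ (1 / p) := by
  have hcont (f : ℝ → ℝ) : ContinuousOn f (spectrum ℝ M) := M.finite_real_spectrum.continuousOn f
  have hneg_eq : matFun hM (negPartR 1) = cfc (negPartR 1) M := matFun_eq_cfc hM _
  have hpos_eq : M + matFun hM (negPartR 1) = cfc (fun x => x + negPartR 1 x) M := by
    rw [hneg_eq, cfc_add _ _ _ (hcont _) (hcont _), cfc_id' ℝ M]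
  have hsub_eq : M - (M + matFun hM (negPartR 1)) = cfc (fun x => -negPartR 1 x) M := by
    rw [sub_add_cancel_left, hneg_eq, cfc_neg]
  have hpsd : (M + matFun hM (negPartR 1)).PosSemidef :=
    hpos_eq ▸ Matrix.nonneg_iff_posSemidef.1 (cfc_nonneg fun x _ => add_negPartR_one_nonneg x)
  have hneg : (matFun hM (negPartR 1)).IsHermitian := hneg_eq ▸ cfc_predicate _ _
  have hsub : (M - (M + matFun hM (negPartR 1))).IsHermitian := hsub_eq ▸ cfc_predicate _ _
  have hp₀ : p ≠ 0 := by positivity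
  have hneg_norm : schattenNorm p hneg = trFun hM (negPartR p) ^ (1 / p) := by
    simp only [schattenNorm_eq_of_eq_cfc p hM hneg hneg_eq, abs_negPartR_one_rpow hp₀]
  have hsub_norm : schattenNorm p hsub = trFun hM (negPartR p) ^ (1 / p) := by
    simp only [schattenNorm_eq_of_eq_cfc p hM hsub hsub_eq, abs_neg, abs_negPartR_one_rpow hp₀]
  have hmin (N : Matrix (Fin s) (Fin s) ℂ) (hN : N.PosSemidef) :
      schattenNorm p hsub ≤ schattenNorm p (hM.sub hN.isHermitian) :=
    hsub_norm ▸ trFun_negPartR_rpow_le_schattenNorm_sub hp hM hN _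
  have hleast : IsLeast {r | ∃ (N : Matrix (Fin s) (Fin s) ℂ) (hN : N.PosSemidef),
      r = schattenNorm p (hM.sub hN.isHermitian)} (schattenNorm p hsub) :=
    ⟨⟨_, hpsd, rfl⟩, by rintro _ ⟨N, hN, rfl⟩; exact hmin N hN⟩
  exact ⟨hpsd, hneg, hsub, hmin, hleast.csInf_eq, hsub_norm.trans hneg_norm.symm, hneg_norm⟩

end
end

section
/- Let p ≥ 1 be an integer and M a Hermitian s×s complex matrix with ‖M‖_∞ ≤ 1. Then d_p(M)^p = inf{ tr(q(M)) : q ∈ ℝ[x], f_p(x) ≤ q(x) for all x ∈ [−1,1] } and also d_p(M)^p = sup{ tr(q(M)) : q ∈ ℝ[x], q(x) ≤ f_p(x) for all x ∈ [−1,1] }. -/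
open scoped ComplexOrder

noncomputable section

/-! For a psd `N`, the diagonal of `M - N` in an eigenbasis of `M` lies entrywise below the
eigenvalues of `M`, and `f_p(y) ≤ |x|^p` whenever `x ≤ y`. Peierls' inequality for the convex
function `|x|^p` therefore gives `tr f_p(M) ≤ ‖M - N‖_p^p`, with equality at
`N = max(M, 0)`, where `M - N = min(M, 0)`. So `d_p(M)^p = tr f_p(M)`. Since the spectrum lies in
`[-1, 1]` and `f_p` is continuous, Weierstrass approximation gives polynomials `q ≥ f_p` and
`q ≤ f_p` on `[-1, 1]` within any `ε` of `f_p`, whose traces are within `ε` of `tr f_p(M)`. -/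

open Matrix
open scoped InnerProductSpace

lemma negPart_eq_abs_min_pow {p : ℕ} (hp : p ≠ 0) (x : ℝ) : negPart p x = |min x 0| ^ p := by
  unfold _root_.negPart
  split_ifs with hx
  · rw [min_eq_left hx.le]
  · rw [min_eq_right (not_lt.mp hx), abs_zero, zero_pow hp]

lemma negPart_le_abs_pow_of_le (p : ℕ) {x y : ℝ} (hxy : x ≤ y) : negPart p y ≤ |x| ^ p := by
  unfold _root_.negPart
  split_ifs with hy
  · exact pow_le_pow_left₀ (abs_nonneg y) (abs_le_abs_of_nonpos hy.le hxy) p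
  · positivity

lemma convexOn_abs_pow (p : ℕ) : ConvexOn ℝ Set.univ fun x : ℝ => |x| ^ p :=
  (convexOn_univ_norm (E := ℝ)).pow (fun _ _ => norm_nonneg _) p

theorem ConvexOn.sum_comp_mulVec_le {n : Type*} [Fintype n] [DecidableEq n]
    {W : Matrix n n ℝ} (hW : W ∈ doublyStochastic ℝ n) {g : ℝ → ℝ}
    (hg : ConvexOn ℝ Set.univ g) (x : n → ℝ) :
    ∑ i, g ((W *ᵥ x) i) ≤ ∑ j, g (x j) := by
  have hjensen (i : n) : g ((W *ᵥ x) i) ≤ ∑ j, W i j * g (x j) := by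
    simpa [mulVec, dotProduct] using hg.map_sum_le (t := Finset.univ) (w := W i) (p := x)
      (fun j _ => nonneg_of_mem_doublyStochastic hW) (sum_row_of_mem_doublyStochastic hW i)
      (fun j _ => Set.mem_univ _)
  calc ∑ i, g ((W *ᵥ x) i)
      ≤ ∑ i, ∑ j, W i j * g (x j) := Finset.sum_le_sum fun i _ => hjensen i
    _ = ∑ j, g (x j) := by
      rw [Finset.sum_comm]
      simp [← Finset.sum_mul, sum_col_of_mem_doublyStochastic hW]

theorem OrthonormalBasis.norm_inner_sq_mem_doublyStochastic {𝕜 E n : Type*} [RCLike 𝕜]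
    [NormedAddCommGroup E] [InnerProductSpace 𝕜 E] [Fintype n] [DecidableEq n]
    (u v : OrthonormalBasis n 𝕜 E) :
    Matrix.of (fun i j => ‖⟪u j, v i⟫_𝕜‖ ^ 2) ∈ doublyStochastic ℝ n := by
  refine mem_doublyStochastic_iff_sum.2 ⟨fun i j => by rw [of_apply]; positivity, fun i => ?_,
    fun j => ?_⟩
  · simp [u.sum_sq_norm_inner_right, v.orthonormal.1 i]
  · simp [v.sum_sq_norm_inner_left, u.orthonormal.1 j]

namespace Matrix.IsHermitian

variable {𝕜 n : Type*} [RCLike 𝕜] [Fintype n] [DecidableEq n] {A : Matrix n n 𝕜}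

theorem re_dotProduct_mulVec_eq_sum (hA : A.IsHermitian) (v : EuclideanSpace 𝕜 n) :
    RCLike.re (star ⇑v ⬝ᵥ (A *ᵥ ⇑v)) =
      ∑ j, ‖⟪hA.eigenvectorBasis j, v⟫_𝕜‖ ^ 2 * hA.eigenvalues j := by
  set u := hA.eigenvectorBasis
  have hv : (⇑v : n → 𝕜) = ∑ j, ⟪u j, v⟫_𝕜 • ⇑(u j) := by
    conv_lhs => rw [← u.sum_repr' v]
    simp
  have hAv : A *ᵥ ⇑v = ∑ j, (⟪u j, v⟫_𝕜 * hA.eigenvalues j) • ⇑(u j) := by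
    rw [hv, Matrix.mulVec_sum]
    refine Finset.sum_congr rfl fun j _ => ?_
    rw [Matrix.mulVec_smul, hA.mulVec_eigenvectorBasis, RCLike.real_smul_eq_coe_smul (K := 𝕜),
      smul_smul]
  have hdot (j : n) : star ⇑v ⬝ᵥ ⇑(u j) = ⟪v, u j⟫_𝕜 := by
    rw [EuclideanSpace.inner_eq_star_dotProduct, dotProduct_comm]
  rw [hAv, dotProduct_sum, map_sum]
  refine Finset.sum_congr rfl fun j _ => ?_
  rw [dotProduct_smul, hdot, smul_eq_mul, mul_right_comm, ← inner_conj_symm v, RCLike.mul_conj]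
  norm_cast

/-- Peierls' inequality: the diagonal of `A` in any orthonormal basis is a doubly stochastic
average of its eigenvalues. -/
theorem sum_convexOn_re_dotProduct_mulVec_le (hA : A.IsHermitian)
    (v : OrthonormalBasis n 𝕜 (EuclideanSpace 𝕜 n)) {g : ℝ → ℝ} (hg : ConvexOn ℝ Set.univ g) :
    ∑ i, g (RCLike.re (star ⇑(v i) ⬝ᵥ (A *ᵥ ⇑(v i)))) ≤ ∑ j, g (hA.eigenvalues j) := by
  simp_rw [hA.re_dotProduct_mulVec_eq_sum]
  exact hg.sum_comp_mulVec_le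
    (hA.eigenvectorBasis.norm_inner_sq_mem_doublyStochastic v) hA.eigenvalues

open Polynomial in
theorem sum_comp_eigenvalues_of_charpoly_eq (hA : A.IsHermitian) {e : n → ℝ}
    (he : A.charpoly = ∏ i, (X - C (e i : 𝕜))) (g : ℝ → ℝ) :
    ∑ i, g (hA.eigenvalues i) = ∑ i, g (e i) := by
  have hroots : Finset.univ.val.map (fun i => (hA.eigenvalues i : 𝕜)) =
      Finset.univ.val.map (fun i => (e i : 𝕜)) := by
    rw [← Function.comp_def, ← hA.roots_charpoly_eq_eigenvalues, he, roots_prod _ _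
      (Finset.prod_ne_zero_iff.2 fun i _ => X_sub_C_ne_zero _)]
    simp only [roots_X_sub_C, Multiset.bind_singleton]
  have hsum := congrArg (fun m => (m.map (g ∘ RCLike.re)).sum) hroots
  simp only [Multiset.map_map, Function.comp_def, RCLike.ofReal_re] at hsum
  exact hsum

theorem sub_cfc_max_zero (hA : A.IsHermitian) :
    A - cfc (fun x : ℝ => max x 0) A = cfc (fun x : ℝ => min x 0) A := by
  have hA' : IsSelfAdjoint A := hA
  nth_rw 1 [← cfc_id' ℝ A]
  rw [← cfc_sub (fun x : ℝ => x) (fun x : ℝ => max x 0) A]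
  congr 1
  funext x
  linarith [min_add_max x 0]

end Matrix.IsHermitian

open scoped MatrixOrder in
theorem Matrix.posSemidef_cfc_max_zero {𝕜 n : Type*} [RCLike 𝕜] [Fintype n] [DecidableEq n]
    (A : Matrix n n 𝕜) : (cfc (fun x : ℝ => max x 0) A).PosSemidef :=
  (cfc_nonneg (A := Matrix n n 𝕜) (R := ℝ) fun x _ => le_max_right x 0).posSemidef

lemma exists_polynomial_sub_mem_Icc_of_continuousOn {a b : ℝ} {f : ℝ → ℝ}
    (hf : ContinuousOn f (Set.Icc a b)) (c : ℝ) {ε : ℝ} (hε : 0 < ε) :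
    ∃ q : Polynomial ℝ, ∀ x ∈ Set.Icc a b, q.eval x - f x ∈ Set.Icc c (c + ε) := by
  obtain ⟨q, hq⟩ := exists_polynomial_near_of_continuousOn a b f hf (ε / 2) (half_pos hε)
  refine ⟨q + Polynomial.C (c + ε / 2), fun x hx => ?_⟩
  have := abs_lt.mp (hq x hx)
  simp only [Polynomial.eval_add, Polynomial.eval_C, Set.mem_Icc]
  constructor <;> linarith

section NormalizedTrace

variable {s : ℕ} {M : Matrix (Fin s) (Fin s) ℂ}

lemma schattenNorm_natCast (p : ℕ) (hM : M.IsHermitian) :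
    schattenNorm (p : ℝ) hM = (trFun hM fun x => |x| ^ p) ^ (1 / (p : ℝ)) := by
  simp only [schattenNorm, trFun, Real.rpow_natCast]

lemma trFun_negPart_le_of_posSemidef (p : ℕ) (hM : M.IsHermitian)
    {N : Matrix (Fin s) (Fin s) ℂ} (hN : N.PosSemidef) :
    trFun hM (fun x => negPart p x) ≤ trFun (hM.sub hN.isHermitian) fun x => |x| ^ p := by
  set v := hM.eigenvectorBasis
  have hdiag (i : Fin s) :
      RCLike.re (star ⇑(v i) ⬝ᵥ ((M - N) *ᵥ ⇑(v i))) ≤ hM.eigenvalues i := by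
    rw [sub_mulVec, dotProduct_sub, map_sub, hM.eigenvalues_eq]
    linarith [hN.re_dotProduct_nonneg ⇑(v i)]
  refine mul_le_mul_of_nonneg_left ?_ (by positivity)
  calc ∑ i, negPart p (hM.eigenvalues i)
      ≤ ∑ i, |RCLike.re (star ⇑(v i) ⬝ᵥ ((M - N) *ᵥ ⇑(v i)))| ^ p :=
        Finset.sum_le_sum fun i _ => negPart_le_abs_pow_of_le p (hdiag i)
    _ ≤ _ :=
        (hM.sub hN.isHermitian).sum_convexOn_re_dotProduct_mulVec_le v (convexOn_abs_pow p)

lemma trFun_sub_cfc_max_zero (hM : M.IsHermitian) (g : ℝ → ℝ) :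
    trFun (hM.sub (posSemidef_cfc_max_zero M).isHermitian) g =
      trFun hM fun x => g (min x 0) := by
  unfold trFun
  congr 1
  exact (hM.sub (posSemidef_cfc_max_zero M).isHermitian).sum_comp_eigenvalues_of_charpoly_eq
    (by rw [hM.sub_cfc_max_zero, hM.charpoly_cfc_eq]) g

theorem distPSD_pow_eq_trFun_negPart {p : ℕ} (hp : p ≠ 0) (hM : M.IsHermitian) :
    distPSD (p : ℝ) hM ^ p = trFun hM (fun x => negPart p x) := by
  set T := trFun hM (fun x => negPart p x)
  have hattain :
      trFun (hM.sub (posSemidef_cfc_max_zero M).isHermitian) (fun x => |x| ^ p) = T := by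
    rw [trFun_sub_cfc_max_zero hM]
    simp_rw [T, ← negPart_eq_abs_min_pow hp]
  have hT : 0 ≤ T := hattain ▸ by unfold trFun; positivity
  have hleast : IsLeast {r | ∃ (N : Matrix (Fin s) (Fin s) ℂ) (hN : N.PosSemidef),
      r = schattenNorm p (hM.sub hN.isHermitian)} (T ^ (1 / (p : ℝ))) := by
    refine ⟨⟨_, posSemidef_cfc_max_zero M, by rw [schattenNorm_natCast, hattain]⟩, ?_⟩
    rintro _ ⟨N, hN, rfl⟩
    rw [schattenNorm_natCast]
    exact Real.rpow_le_rpow hT (trFun_negPart_le_of_posSemidef p hM hN) (by positivity)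
  rw [distPSD, hleast.csInf_eq, ← Real.rpow_natCast, ← Real.rpow_mul hT,
    one_div_mul_cancel (Nat.cast_ne_zero.2 hp), Real.rpow_one]

lemma trFun_mono (hM : M.IsHermitian) {f g : ℝ → ℝ}
    (hfg : ∀ i, f (hM.eigenvalues i) ≤ g (hM.eigenvalues i)) : trFun hM f ≤ trFun hM g :=
  mul_le_mul_of_nonneg_left (Finset.sum_le_sum fun i _ => hfg i) (by positivity)

lemma trFun_le_trFun_add (hM : M.IsHermitian) {f g : ℝ → ℝ} {ε : ℝ} (hε : 0 ≤ ε)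
    (hfg : ∀ i, f (hM.eigenvalues i) ≤ g (hM.eigenvalues i) + ε) :
    trFun hM f ≤ trFun hM g + ε := by
  have hs : (s : ℝ)⁻¹ * s ≤ 1 := by
    rcases eq_or_ne (s : ℝ) 0 with h | h <;> simp [h]
  calc trFun hM f ≤ trFun hM fun x => g x + ε := trFun_mono hM hfg
    _ = trFun hM g + (s : ℝ)⁻¹ * s * ε := by
      simp [trFun, Finset.sum_add_distrib, mul_add, mul_assoc]
    _ ≤ trFun hM g + ε := by nlinarith

theorem sInf_trFun_polynomial_ge {a b : ℝ} (hM : M.IsHermitian)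
    (hspec : ∀ i, hM.eigenvalues i ∈ Set.Icc a b) {f : ℝ → ℝ}
    (hf : ContinuousOn f (Set.Icc a b)) :
    sInf {r : ℝ | ∃ q : Polynomial ℝ, (∀ x ∈ Set.Icc a b, f x ≤ q.eval x) ∧
      r = trFun hM (fun x => q.eval x)} = trFun hM f := by
  refine csInf_eq_of_forall_ge_of_forall_gt_exists_lt ?_ ?_ fun w hw => ?_
  · obtain ⟨q, hq⟩ := exists_polynomial_sub_mem_Icc_of_continuousOn hf 0 one_pos
    exact ⟨_, q, fun x hx => by linarith [(hq x hx).1], rfl⟩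
  · rintro _ ⟨q, hq, rfl⟩
    exact trFun_mono hM fun i => hq _ (hspec i)
  · obtain ⟨ε, hε, hεw⟩ : ∃ ε, 0 < ε ∧ trFun hM f + ε < w :=
      ⟨_, half_pos (sub_pos.2 hw), by linarith⟩
    obtain ⟨q, hq⟩ := exists_polynomial_sub_mem_Icc_of_continuousOn hf 0 hε
    refine ⟨_, ⟨q, fun x hx => by linarith [(hq x hx).1], rfl⟩, ?_⟩
    have := trFun_le_trFun_add hM (f := fun x => q.eval x) (g := f) hε.le
      fun i => by linarith [(hq _ (hspec i)).2]
    linarith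

theorem sSup_trFun_polynomial_le {a b : ℝ} (hM : M.IsHermitian)
    (hspec : ∀ i, hM.eigenvalues i ∈ Set.Icc a b) {f : ℝ → ℝ}
    (hf : ContinuousOn f (Set.Icc a b)) :
    sSup {r : ℝ | ∃ q : Polynomial ℝ, (∀ x ∈ Set.Icc a b, q.eval x ≤ f x) ∧
      r = trFun hM (fun x => q.eval x)} = trFun hM f := by
  refine csSup_eq_of_forall_le_of_forall_lt_exists_gt ?_ ?_ fun w hw => ?_
  · obtain ⟨q, hq⟩ := exists_polynomial_sub_mem_Icc_of_continuousOn hf (-1) one_pos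
    exact ⟨_, q, fun x hx => by linarith [(hq x hx).2], rfl⟩
  · rintro _ ⟨q, hq, rfl⟩
    exact trFun_mono hM fun i => hq _ (hspec i)
  · obtain ⟨ε, hε, hεw⟩ : ∃ ε, 0 < ε ∧ w < trFun hM f - ε :=
      ⟨_, half_pos (sub_pos.2 hw), by linarith⟩
    obtain ⟨q, hq⟩ := exists_polynomial_sub_mem_Icc_of_continuousOn hf (-ε) hε
    refine ⟨_, ⟨q, fun x hx => by linarith [(hq x hx).2], rfl⟩, ?_⟩
    have := trFun_le_trFun_add hM (f := f) (g := fun x => q.eval x) hε.le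
      fun i => by linarith [(hq _ (hspec i)).1]
    linarith

end NormalizedTrace

/-- `d_p(M)^p` equals the infimum of `tr(q(M))` over polynomials `q ≥ f_p`
on `[-1,1]`, and also the supremum of `tr(q(M))` over polynomials `q ≤ f_p` on `[-1,1]`. -/
theorem statement1 (s : ℕ) (p : ℕ) (hp : 1 ≤ p) (M : Matrix (Fin s) (Fin s) ℂ)
    (hM : M.IsHermitian) (hnorm : ∀ i, |hM.eigenvalues i| ≤ 1) :
    distPSD (p : ℝ) hM ^ p =
      sInf { r : ℝ | ∃ q : Polynomial ℝ,
        (∀ x ∈ Set.Icc (-1 : ℝ) 1, negPart p x ≤ q.eval x) ∧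
        r = trFun hM (fun x => q.eval x) } ∧
    distPSD (p : ℝ) hM ^ p =
      sSup { r : ℝ | ∃ q : Polynomial ℝ,
        (∀ x ∈ Set.Icc (-1 : ℝ) 1, q.eval x ≤ negPart p x) ∧
        r = trFun hM (fun x => q.eval x) } := by
  have hspec (i : Fin s) : hM.eigenvalues i ∈ Set.Icc (-1 : ℝ) 1 := abs_le.mp (hnorm i)
  have hcont : Continuous (negPart p) := by
    rw [funext (negPart_eq_abs_min_pow (by omega : p ≠ 0))]
    fun_prop
  rw [distPSD_pow_eq_trFun_negPart (by omega) hM]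
  exact ⟨(sInf_trFun_polynomial_ge hM hspec hcont.continuousOn).symm,
    (sSup_trFun_polynomial_le hM hspec hcont.continuousOn).symm⟩

end
end

section
/- Let p ≥ 1 and m ≥ 1 be integers and M a Hermitian s×s complex matrix with ‖M‖_∞ ≤ 1. Then there exists a Borel probability measure μ on [−1,1] such that ∫ x^k dμ(x) = tr(M^k) for all k = 1,…,m and ∫ f_p dμ = d⁺_{p,m}(M)^p. -/
open scoped ComplexOrder

noncomputable section

/-- The upper bound `d⁺_{p,m}(M)`. -/
def dplus {s : ℕ} (p m : ℕ) {M : Matrix (Fin s) (Fin s) ℂ} (hM : M.IsHermitian) : ℝ :=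
  sInf { r : ℝ | ∃ q : Polynomial ℝ, q.natDegree ≤ m ∧
    (∀ x ∈ Set.Icc (-1 : ℝ) 1, negPart p x ≤ q.eval x) ∧
    r = trFun hM (fun x => q.eval x) ^ (1 / (p : ℝ)) }

/-- The lower bound `d⁻_{p,m}(M)`. -/
def dminus {s : ℕ} (p m : ℕ) {M : Matrix (Fin s) (Fin s) ℂ} (hM : M.IsHermitian) : ℝ :=
  sSup { r : ℝ | ∃ q : Polynomial ℝ, q.natDegree ≤ m ∧
    (∀ x ∈ Set.Icc (-1 : ℝ) 1, q.eval x ≤ negPart p x) ∧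
    r = trFun hM (fun x => q.eval x) ^ (1 / (p : ℝ)) }

open MeasureTheory

/-!
The first `m` moments and the value `∫ f_p` of a probability measure on `[-1,1]` form a point of
the convex hull `S` of the compact curve `x ↦ ((x ^ k)_{k ≤ m}, f_p x)`; `S` is compact by
Carathéodory. Over the moment vector `c` of the spectral measure of `M` the fibre of `S` is a
compact interval, and its top point `(c, t)` is realised by a finitely supported measure. Weak
duality gives `t ≤ tr q(M)` for every polynomial majorant `q`, and separating `(c, b)` from `S`
for `b > t` produces a majorant with `tr q(M) < b`. Hence `t = d⁺_{p,m}(M)^p`.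
-/

open Set Polynomial

def polyMajorants (m : ℕ) (K : Set ℝ) (f : ℝ → ℝ) : Set ℝ[X] :=
  {q | q.natDegree ≤ m ∧ ∀ x ∈ K, f x ≤ q.eval x}

theorem IsCompact.convexHull {E : Type*} [NormedAddCommGroup E] [NormedSpace ℝ E]
    [FiniteDimensional ℝ E] {A : Set E} (hA : IsCompact A) :
    IsCompact (_root_.convexHull ℝ A) := by
  let comb (n : ℕ) (q : (Fin n → ℝ) × (Fin n → E)) : E := ∑ i, q.1 i • q.2 i
  let D (n : ℕ) := stdSimplex ℝ (Fin n) ×ˢ univ.pi fun _ : Fin n => A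
  -- Carathéodory: at most `finrank + 1` points are needed
  have hull_eq : _root_.convexHull ℝ A =
      ⋃ n ∈ Finset.range (Module.finrank ℝ E + 2), comb n '' D n := by
    refine Subset.antisymm (fun y hy => ?_) (iUnion₂_subset fun n _ => ?_)
    · obtain ⟨ι, _, z, w, hzA, hz, hw0, hw1, rfl⟩ := eq_pos_convex_span_of_mem_convexHull hy
      have hcard : Fintype.card ι < Module.finrank ℝ E + 2 :=
        Nat.lt_succ_of_le <|
          hz.card_le_finrank_succ.trans (Nat.succ_le_succ (Submodule.finrank_le _))
      let e := (Fintype.equivFin ι).symm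
      refine mem_iUnion₂.2 ⟨_, Finset.mem_range.2 hcard, (w ∘ e, z ∘ e),
        ⟨⟨fun j => (hw0 _).le, ?_⟩, fun j _ => hzA (mem_range_self _)⟩, ?_⟩
      · exact (e.sum_comp w).trans hw1
      · exact e.sum_comp fun i => w i • z i
    · rintro _ ⟨q, ⟨⟨hq0, hq1⟩, hqA⟩, rfl⟩
      exact (convex_convexHull ℝ A).sum_mem (fun i _ => hq0 i) hq1
        fun i _ => subset_convexHull ℝ A (hqA i (mem_univ i))
  rw [hull_eq]
  exact (Finset.range _).isCompact_biUnion fun n _ =>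
    ((isCompact_stdSimplex ℝ (Fin n)).prod (isCompact_univ_pi fun _ => hA)).image (by fun_prop)

theorem Matrix.IsHermitian.trace_pow {n 𝕜 : Type*} [Fintype n] [DecidableEq n] [RCLike 𝕜]
    {A : Matrix n n 𝕜} (hA : A.IsHermitian) (k : ℕ) :
    (A ^ k).trace = ∑ i, (hA.eigenvalues i : 𝕜) ^ k := by
  conv_lhs => rw [hA.spectral_theorem]
  rw [← map_pow, Unitary.conjStarAlgAut_apply, trace_mul_cycle,
    Unitary.coe_star_mul_self, one_mul, diagonal_pow, trace_diagonal]
  simp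

theorem exists_isProbabilityMeasure_of_mem_convexHull {X E : Type*} [MeasurableSpace X]
    [MeasurableSingletonClass X] [AddCommGroup E] [Module ℝ E] {Φ : X → E} {K : Set X} {y : E}
    (hy : y ∈ convexHull ℝ (Φ '' K)) :
    ∃ μ : Measure X, IsProbabilityMeasure μ ∧ μ Kᶜ = 0 ∧
      ∀ L : E →ₗ[ℝ] ℝ, ∫ x, L (Φ x) ∂μ = L y := by
  obtain ⟨ι, _, z, w, hzK, -, hw0, hw1, rfl⟩ := eq_pos_convex_span_of_mem_convexHull hy
  choose x hxK hxz using fun i => hzK (mem_range_self i)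
  let μ := Measure.sum fun i => ENNReal.ofReal (w i) • Measure.dirac (x i)
  have hμ : ∀ s, μ s = ∑ i, ENNReal.ofReal (w i) * s.indicator 1 (x i) := by
    simp [μ, Measure.dirac_apply]
  refine ⟨μ, ⟨?_⟩, ?_, fun L => ?_⟩
  · simp [hμ, ← ENNReal.ofReal_sum_of_nonneg fun i _ => (hw0 i).le, hw1]
  · simp [hμ, hxK]
  · rw [integral_sum_dirac fun i => ENNReal.ofReal_ne_top, tsum_fintype, map_sum]
    simp [hxz, ENNReal.toReal_ofReal (hw0 _).le]

theorem isGLB_affine_majorants_of_isGreatest {E : Type*} [NormedAddCommGroup E] [NormedSpace ℝ E]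
    {G : Set (E × ℝ)} (hG : IsClosed (convexHull ℝ G)) {c : E} {t : ℝ}
    (ht : IsGreatest {t | (c, t) ∈ convexHull ℝ G} t) :
    IsGLB {r | ∃ (a : ℝ) (ℓ : StrongDual ℝ E), (∀ z ∈ G, z.2 ≤ a + ℓ z.1) ∧ r = a + ℓ c} t := by
  refine ⟨?_, fun b hb => not_lt.1 fun htb => ?_⟩
  · rintro _ ⟨a, ℓ, hG_le, rfl⟩
    have hconv : Convex ℝ {z : E × ℝ | z.2 - ℓ z.1 ≤ a} :=
      convex_halfSpace_le
        ((LinearMap.snd ℝ E ℝ - (ℓ : E →ₗ[ℝ] ℝ) ∘ₗ LinearMap.fst ℝ E ℝ).isLinear) a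
    have : t - ℓ c ≤ a :=
      convexHull_min (fun z hz => show z.2 - ℓ z.1 ≤ a by linarith [hG_le z hz]) hconv ht.1
    linarith
  · have hb_notMem : (c, b) ∉ convexHull ℝ G := fun h => absurd (ht.2 h) (not_le.2 htb)
    obtain ⟨g, u, hg, hgu⟩ :=
      geometric_hahn_banach_closed_point (convex_convexHull ℝ G) hG hb_notMem
    have hg_apply : ∀ z : E × ℝ, g z = g (z.1, 0) + z.2 * g (0, 1) := fun z => by
      rw [← smul_eq_mul, ← map_smul, ← map_add]; simp
    set β := g (0, 1)
    have hβ : 0 < β := by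
      have := hg _ ht.1
      rw [hg_apply] at this hgu
      nlinarith
    -- dividing the separation `g (y, s) < u` by `β > 0` turns it into an affine majorant
    let ℓ : StrongDual ℝ E := -β⁻¹ • g.comp (ContinuousLinearMap.inl ℝ E ℝ)
    have hℓ : ∀ y, β⁻¹ * u + ℓ y = (u - g (y, 0)) / β := fun y => by
      simp only [ℓ, smul_apply, ContinuousLinearMap.comp_apply, ContinuousLinearMap.inl_apply,
        smul_eq_mul]
      field_simp
      ring
    refine absurd (hb ⟨β⁻¹ * u, ℓ, fun z hz => ?_, rfl⟩) (not_le.2 ?_)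
    · have := hg z (subset_convexHull ℝ G hz)
      rw [hg_apply] at this
      rw [hℓ, le_div_iff₀ hβ]
      linarith
    · rw [hg_apply] at hgu
      rw [hℓ, div_lt_iff₀ hβ]
      linarith

theorem Polynomial.eval_eq_sum_fin_of_natDegree_le {R : Type*} [CommSemiring R] {q : R[X]}
    {m : ℕ} (hq : q.natDegree ≤ m) (x : R) :
    q.eval x = ∑ k : Fin (m + 1), q.coeff k * x ^ (k : ℕ) := by
  rw [eval_eq_sum_range' (Nat.lt_succ_of_le hq),
    Fin.sum_univ_eq_sum_range (fun k => q.coeff k * x ^ k)]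

theorem exists_strongDual_apply_pow_eq_eval {m : ℕ} {q : ℝ[X]} (hq : q.natDegree ≤ m) :
    ∃ ℓ : StrongDual ℝ (Fin (m + 1) → ℝ), ∀ x, ℓ (fun k => x ^ (k : ℕ)) = q.eval x :=
  ⟨∑ k : Fin (m + 1), q.coeff k • ContinuousLinearMap.proj k, fun x => by
    simp [eval_eq_sum_fin_of_natDegree_le hq]⟩

theorem exists_polynomial_eval_eq_affine (m : ℕ) (a : ℝ)
    (ℓ : StrongDual ℝ (Fin (m + 1) → ℝ)) :
    ∃ q : ℝ[X], q.natDegree ≤ m ∧ ∀ x, q.eval x = a + ℓ (fun k => x ^ (k : ℕ)) := by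
  classical
  refine ⟨C a + ∑ k : Fin (m + 1), C (ℓ (Pi.single k 1)) * X ^ (k : ℕ), ?_, fun x => ?_⟩
  · refine (natDegree_add_le _ _).trans (max_le (by simp) ?_)
    exact natDegree_sum_le_of_forall_le _ _ fun k _ =>
      (natDegree_C_mul_X_pow_le _ _).trans (Nat.lt_succ_iff.1 k.2)
  · conv_rhs => rw [← Finset.univ_sum_single (fun k : Fin (m + 1) => x ^ (k : ℕ))]
    simp only [eval_add, eval_C, eval_finsetSum, eval_mul, eval_pow, eval_X, map_sum]
    congr 1
    refine Finset.sum_congr rfl fun k _ => ?_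
    rw [mul_comm, ← smul_eq_mul, ← map_smul, ← Pi.single_smul, smul_eq_mul, mul_one]

theorem exists_isProbabilityMeasure_moments_eq_isGLB {ι : Type*} [Fintype ι] {K : Set ℝ}
    (hK : IsCompact K) {f : ℝ → ℝ} (hf : ContinuousOn f K) (m : ℕ) {w x : ι → ℝ}
    (hw0 : ∀ i, 0 ≤ w i) (hw1 : ∑ i, w i = 1) (hx : ∀ i, x i ∈ K) :
    ∃ μ : Measure ℝ, IsProbabilityMeasure μ ∧ μ Kᶜ = 0 ∧
      (∀ k ≤ m, ∫ y, y ^ k ∂μ = ∑ i, w i * x i ^ k) ∧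
      IsGLB ((fun q : ℝ[X] => ∑ i, w i * q.eval (x i)) '' polyMajorants m K f)
        (∫ y, f y ∂μ) := by
  let pows (y : ℝ) : Fin (m + 1) → ℝ := fun k => y ^ (k : ℕ)
  let Φ (y : ℝ) : (Fin (m + 1) → ℝ) × ℝ := (pows y, f y)
  let S := convexHull ℝ (Φ '' K)
  have hS : IsCompact S := (hK.image_of_continuousOn (by fun_prop)).convexHull
  let c := ∑ i, w i • pows (x i)
  have hc : (c, ∑ i, w i * f (x i)) ∈ S := by
    convert (convex_convexHull ℝ _).sum_mem (fun i _ => hw0 i) hw1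
      fun i _ => subset_convexHull ℝ _ (mem_image_of_mem Φ (hx i)) using 1
    ext <;> simp [Φ, c, Prod.fst_sum, Prod.snd_sum]
  obtain ⟨t, ht⟩ : ∃ t, IsGreatest {t | (c, t) ∈ S} t :=
    ((hS.image continuous_snd).of_isClosed_subset (hS.isClosed.preimage (by fun_prop))
      fun t ht => ⟨_, ht, rfl⟩).exists_isGreatest ⟨_, hc⟩
  obtain ⟨μ, hμ, hμK, hμΦ⟩ := exists_isProbabilityMeasure_of_mem_convexHull ht.1
  have hvalue : ∀ (q : ℝ[X]) (a : ℝ) (ℓ : StrongDual ℝ (Fin (m + 1) → ℝ)),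
      (∀ y, q.eval y = a + ℓ (pows y)) → ∑ i, w i * q.eval (x i) = a + ℓ c := by
    intro q a ℓ hq
    simp [hq, c, mul_add, Finset.sum_add_distrib, ← Finset.sum_mul, hw1, map_sum]
  refine ⟨μ, hμ, hμK, fun k hk => ?_, ?_⟩
  · simpa [Φ, pows, c, Finset.sum_apply] using
      hμΦ ((LinearMap.proj (⟨k, Nat.lt_succ_of_le hk⟩ : Fin (m + 1))).comp
        (LinearMap.fst ℝ _ ℝ))
  · have hf : ∫ y, f y ∂μ = t := by simpa [Φ] using hμΦ (LinearMap.snd ℝ _ ℝ)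
    rw [hf]
    convert isGLB_affine_majorants_of_isGreatest hS.isClosed ht using 1
    ext r
    constructor
    · rintro ⟨q, ⟨hq, hqf⟩, rfl⟩
      obtain ⟨ℓ, hℓ⟩ := exists_strongDual_apply_pow_eq_eval hq
      have hqℓ : ∀ y, q.eval y = 0 + ℓ (pows y) := fun y => by rw [zero_add, hℓ]
      exact ⟨0, ℓ, forall_mem_image.2 fun y hy => (hqf y hy).trans_eq (hqℓ y),
        hvalue q 0 ℓ hqℓ⟩
    · rintro ⟨a, ℓ, hle, rfl⟩
      obtain ⟨q, hq, hqe⟩ := exists_polynomial_eval_eq_affine m a ℓ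
      exact ⟨q, ⟨hq, fun y hy => (forall_mem_image.1 hle hy).trans_eq (hqe y).symm⟩,
        hvalue q a ℓ hqe⟩

theorem negPart_eq_max_neg_pow {p : ℕ} (hp : p ≠ 0) (x : ℝ) :
    negPart p x = max (-x) 0 ^ p := by
  rw [_root_.negPart]
  split_ifs with h
  · rw [max_eq_left (by linarith), abs_of_neg h]
  · rw [max_eq_right (by linarith), zero_pow hp]

theorem continuous_negPart_of_ne_zero {p : ℕ} (hp : p ≠ 0) : Continuous (negPart p) := by
  simp_rw [funext (negPart_eq_max_neg_pow hp)]
  fun_prop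

theorem zero_le_negPart (p : ℕ) (x : ℝ) : 0 ≤ negPart p x := by
  rw [_root_.negPart]
  split_ifs <;> positivity

theorem IsGLB.rpow {V : Set ℝ} {t r : ℝ} (h : IsGLB V t) (ht : 0 ≤ t) (hr : 0 < r) :
    IsGLB ((· ^ r) '' V) (t ^ r) := by
  refine ⟨forall_mem_image.2 fun v hv => Real.rpow_le_rpow ht (h.1 hv) hr.le,
    fun b hb => not_lt.1 fun htb => ?_⟩
  have hb0 : 0 < b := (Real.rpow_nonneg ht r).trans_lt htb
  obtain ⟨v, hv, htv, hvb⟩ :=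
    h.exists_between ((Real.lt_rpow_inv_iff_of_pos ht hb0.le hr).2 htb)
  exact absurd (hb (mem_image_of_mem _ hv))
    (not_le.2 ((Real.lt_rpow_inv_iff_of_pos (ht.trans htv) hb0.le hr).1 hvb))

theorem dplus_pow_eq_of_isGLB {s p m : ℕ} (hp : p ≠ 0) {M : Matrix (Fin s) (Fin s) ℂ}
    (hM : M.IsHermitian) {t : ℝ} (ht : 0 ≤ t)
    (h : IsGLB ((fun q : ℝ[X] => trFun hM (q.eval ·)) ''
      polyMajorants m (Icc (-1) 1) (_root_.negPart p)) t) :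
    dplus p m hM ^ p = t := by
  have hset : {r : ℝ | ∃ q : ℝ[X], q.natDegree ≤ m ∧
      (∀ x ∈ Icc (-1 : ℝ) 1, negPart p x ≤ q.eval x) ∧
      r = trFun hM (fun x => q.eval x) ^ (1 / (p : ℝ))} =
      (· ^ (p : ℝ)⁻¹) '' ((fun q : ℝ[X] => trFun hM (q.eval ·)) ''
        polyMajorants m (Icc (-1) 1) (_root_.negPart p)) := by
    ext r
    simp [polyMajorants, eq_comm, and_assoc]
  rw [dplus, hset, (h.rpow ht (by positivity)).csInf_eq (h.nonempty.image _),
    Real.rpow_inv_natCast_pow ht hp]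

theorem dplus_eq_zero_of_dim_zero {p m : ℕ} (hp : p ≠ 0) {M : Matrix (Fin 0) (Fin 0) ℂ}
    (hM : M.IsHermitian) : dplus p m hM = 0 := by
  have hr : ∀ r ∈ {r : ℝ | ∃ q : ℝ[X], q.natDegree ≤ m ∧
      (∀ x ∈ Icc (-1 : ℝ) 1, negPart p x ≤ q.eval x) ∧
      r = trFun hM (fun x => q.eval x) ^ (1 / (p : ℝ))}, r = 0 := by
    rintro _ ⟨q, -, -, rfl⟩
    simp [trFun, hp]
  exact le_antisymm (Real.sInf_nonpos fun r h => (hr r h).le)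
    (Real.sInf_nonneg fun r h => (hr r h).ge)

theorem statement7_general (s : ℕ) (p m : ℕ) (hp : 1 ≤ p)
    (M : Matrix (Fin s) (Fin s) ℂ) (hM : M.IsHermitian)
    (hnorm : ∀ i, |hM.eigenvalues i| ≤ 1) :
    ∃ μ : Measure ℝ, IsProbabilityMeasure μ ∧ μ (Set.Icc (-1 : ℝ) 1)ᶜ = 0 ∧
      (∀ k, 1 ≤ k → k ≤ m → ((M ^ k).trace / (s : ℂ) = ((∫ x, x ^ k ∂μ : ℝ) : ℂ))) ∧
      ∫ x, negPart p x ∂μ = dplus p m hM ^ p := by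
  have hp0 : p ≠ 0 := by omega
  rcases Nat.eq_zero_or_pos s with rfl | hs
  · refine ⟨Measure.dirac 0, inferInstance, by simp, fun k hk _ => ?_, ?_⟩
    · simp [Matrix.trace, zero_pow (by omega : k ≠ 0)]
    · simp [dplus_eq_zero_of_dim_zero hp0, zero_pow hp0, _root_.negPart]
  obtain ⟨μ, hμ, hμK, hmoments, hglb⟩ := exists_isProbabilityMeasure_moments_eq_isGLB
    isCompact_Icc (continuous_negPart_of_ne_zero hp0).continuousOn m (w := fun _ => (s : ℝ)⁻¹)
    (fun _ => by positivity) (by simp [hs.ne']) fun i => abs_le.1 (hnorm i)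
  refine ⟨μ, hμ, hμK, fun k _ hk => ?_, ?_⟩
  · simp [hmoments k hk, hM.trace_pow, div_eq_inv_mul, Finset.mul_sum]
  · simp only [← Finset.mul_sum] at hglb
    exact (dplus_pow_eq_of_isGLB hp0 hM (integral_nonneg (zero_le_negPart p)) hglb).symm

/-- there is a Borel probability measure on `[-1,1]` matching the first `m`
normalized moments of `M` and realizing `d⁺_{p,m}(M)^p` as `∫ f_p dμ`. -/
theorem statement7 (s : ℕ) (p m : ℕ) (hp : 1 ≤ p) (hm : 1 ≤ m)
    (M : Matrix (Fin s) (Fin s) ℂ) (hM : M.IsHermitian)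
    (hnorm : ∀ i, |hM.eigenvalues i| ≤ 1) :
    ∃ μ : Measure ℝ, IsProbabilityMeasure μ ∧ μ (Set.Icc (-1 : ℝ) 1)ᶜ = 0 ∧
      (∀ k, 1 ≤ k → k ≤ m → ((M ^ k).trace / (s : ℂ) = ((∫ x, x ^ k ∂μ : ℝ) : ℂ))) ∧
      ∫ x, negPart p x ∂μ = dplus p m hM ^ p :=
  statement7_general s p m hp M hM hnorm

end
end

section
/- Let p ≥ 1 be an integer and δ ∈ [0,1]. Then the modulus of continuity of the negative part function f_p on [−1,1] satisfies sup{ |f_p(x) − f_p(y)| : x,y ∈ [−1,1], |x−y| ≤ δ } = 1 − (1−δ)^p, and moreover 1 − (1−δ)^p ≤ p·δ. -/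
/-! Writing `f_p(x) = (max (-x) 0) ^ p` reduces the problem to `t ↦ t ^ p` on `[0, 1]`, since
`x ↦ max (-x) 0` maps `[-1, 1]` onto `[0, 1]` and is 1-Lipschitz. The increments of the convex
increasing function `t ↦ t ^ p` over intervals of length `h` grow with the position of the interval,
so on `[0, 1]` the largest one is `1 - (1 - h) ^ p`, attained at `x₁ = -1`, `x₂ = -(1 - δ)`.
The bound by `p δ` is Bernoulli's inequality. -/

noncomputable section

-- Unqualified, `negPart` is ambiguous with Mathlib's `NegPart.negPart` outside the main theorem.
lemma negPart_eq_max_pow {p : ℕ} (hp : p ≠ 0) (x : ℝ) : _root_.negPart p x = max (-x) 0 ^ p := by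
  unfold _root_.negPart
  split_ifs with h
  · rw [max_eq_left (by linarith), abs_of_neg h]
  · rw [max_eq_right (by linarith), zero_pow hp]

lemma pow_add_sub_pow_le_pow_add_sub_pow {b c h : ℝ} (hb : 0 ≤ b) (hbc : b ≤ c) (hh : 0 ≤ h)
    (p : ℕ) : (b + h) ^ p - b ^ p ≤ (c + h) ^ p - c ^ p := by
  rw [← geom_sum₂_mul, ← geom_sum₂_mul, add_sub_cancel_left, add_sub_cancel_left]
  gcongr with i
  exact pow_nonneg (by linarith) _

lemma abs_pow_sub_pow_le_one_sub_one_sub_pow {u v δ : ℝ} (hu : u ∈ Set.Icc (0 : ℝ) 1)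
    (hv : v ∈ Set.Icc (0 : ℝ) 1) (huv : |u - v| ≤ δ) (hδ : δ ≤ 1) (p : ℕ) :
    |u ^ p - v ^ p| ≤ 1 - (1 - δ) ^ p := by
  wlog hvu : v ≤ u generalizing u v
  · rw [abs_sub_comm] at huv ⊢
    exact this hv hu huv (le_of_not_ge hvu)
  obtain ⟨h, hh, rfl⟩ : ∃ h, 0 ≤ h ∧ u = v + h := ⟨u - v, by linarith, by ring⟩
  have hhδ : h ≤ δ := by rwa [add_sub_cancel_left, abs_of_nonneg hh] at huv
  have hincr : (v + h) ^ p - v ^ p ≤ (1 - h + h) ^ p - (1 - h) ^ p :=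
    pow_add_sub_pow_le_pow_add_sub_pow hv.1 (by linarith [hu.2]) hh p
  have hpow : (1 - δ) ^ p ≤ (1 - h) ^ p := by gcongr
  rw [abs_of_nonneg (sub_nonneg.2 (by gcongr; exact hv.1))]
  rw [sub_add_cancel, one_pow] at hincr
  linarith

lemma max_neg_zero_mem_Icc {x : ℝ} (hx : x ∈ Set.Icc (-1 : ℝ) 1) :
    max (-x) 0 ∈ Set.Icc (0 : ℝ) 1 :=
  ⟨le_max_right _ _, max_le (by linarith [hx.1]) zero_le_one⟩

lemma abs_max_neg_zero_sub_max_neg_zero_le (x y : ℝ) : |max (-x) 0 - max (-y) 0| ≤ |x - y| := by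
  simpa only [neg_sub_neg, abs_sub_comm] using abs_max_sub_max_le_abs (-x) (-y) 0

/-- the modulus of continuity of `f_p` on `[-1,1]` is
`ω(f_p, δ) = 1 - (1-δ)^p`, and `1 - (1-δ)^p ≤ p·δ`. -/
theorem statement14 (p : ℕ) (hp : 1 ≤ p) (δ : ℝ) (hδ : δ ∈ Set.Icc (0 : ℝ) 1) :
    sSup { y : ℝ | ∃ x₁ ∈ Set.Icc (-1 : ℝ) 1, ∃ x₂ ∈ Set.Icc (-1 : ℝ) 1,
        |x₁ - x₂| ≤ δ ∧ y = |negPart p x₁ - negPart p x₂| } = 1 - (1 - δ) ^ p ∧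
      1 - (1 - δ) ^ p ≤ p * δ := by
  obtain ⟨hδ0, hδ1⟩ := hδ
  have hp0 : p ≠ 0 := by omega
  refine ⟨IsGreatest.csSup_eq ⟨?_, ?_⟩, ?_⟩
  · refine ⟨-1, by norm_num, -(1 - δ), ⟨by linarith, by linarith⟩, ?_, ?_⟩
    · rw [show -1 - -(1 - δ) = -δ by ring, abs_neg, abs_of_nonneg hδ0]
    · rw [negPart_eq_max_pow hp0, negPart_eq_max_pow hp0, neg_neg, neg_neg,
        max_eq_left zero_le_one, max_eq_left (by linarith), one_pow,
        abs_of_nonneg (sub_nonneg.2 (pow_le_one₀ (by linarith) (by linarith)))]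
  · rintro y ⟨x₁, hx₁, x₂, hx₂, hdist, rfl⟩
    rw [negPart_eq_max_pow hp0, negPart_eq_max_pow hp0]
    exact abs_pow_sub_pow_le_one_sub_one_sub_pow (max_neg_zero_mem_Icc hx₁)
      (max_neg_zero_mem_Icc hx₂) ((abs_max_neg_zero_sub_max_neg_zero_le x₁ x₂).trans hdist) hδ1 p
  · have := one_add_mul_le_pow (a := -δ) (by linarith) p
    rw [← sub_eq_add_neg] at this
    linarith
end
end

section
/- Let p ≥ 1 be an integer and M a Hermitian s×s complex matrix with ‖M‖_∞ ≤ 1. For each integer m ≥ p, let D_m(M) denote the infimum of tr(q(M))^{1/p} over all polynomials q ∈ ℝ[x] for which there exist nonnegative reals b_α, c_α (α ∈ ℕ², α₁+α₂ ≤ m, only finitely many nonzero) with q(x) = (−x)^p + Σ_α b_α·(−x)^{α₁}(1+x)^{α₂} and q(x) = Σ_α c_α·x^{α₁}(1−x)^{α₂} as polynomial identities. Then d_p(M) ≤ d⁺_{p,m}(M) ≤ D_m(M) for every m, and D_m(M) converges monotonically downward to d_p(M) as m → ∞. -/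
/-!
The distance is computed exactly: `d_p(M)^p = tr f_p(M)`. For `≥`, write `M - N` in the
eigenbasis of `M`; its diagonal lies entrywise below the spectrum of `M` (the diagonal of a
psd matrix is nonnegative) and is majorized by the spectrum of `M - N` (the squared moduli of a
unitary form a doubly stochastic matrix), so convexity and monotonicity of `f_p` give the bound.
Equality holds at `N = M₊`.

The two Handelman certificates force `q ≥ f_p` on `[-1, 0]` and on `[0, 1]`, so every certified
`q` is admissible for `d⁺_{p,m}`, and certificates persist as `m` grows. For convergence, approximate `f_p`
on `[-1, 1]` by a polynomial `q` with `f_p < q ≤ f_p + ε`. Both `q` and `q(-x) - x^p` are then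
strictly positive on `[0, 1]`, and a polynomial positive on `[0, 1]` has nonnegative coefficients
in the Bernstein basis of high degree `n`: its `k`-th coefficient is
`∑ⱼ qⱼ (k)ⱼ / (n)ⱼ = q(k / n) + O(1 / n)`.
-/

open scoped ComplexOrder

noncomputable section

open Polynomial

/-- The value of the Handelman relaxation at level `m`: the infimum of `tr(q(M))^(1/p)`
over all polynomials `q` admitting nonnegative Handelman-type certificates
`q(x) = (-x)^p + Σ_α b_α (-x)^{α₁} (1+x)^{α₂}` and
`q(x) = Σ_α c_α x^{α₁} (1-x)^{α₂}` with `α₁ + α₂ ≤ m`. -/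
def handel {s : ℕ} (p m : ℕ) {M : Matrix (Fin s) (Fin s) ℂ} (hM : M.IsHermitian) : ℝ :=
  sInf { r : ℝ | ∃ (q : Polynomial ℝ) (b c : ℕ × ℕ → ℝ),
    (∀ α, 0 ≤ b α) ∧ (∀ α, 0 ≤ c α) ∧
    (∀ α : ℕ × ℕ, m < α.1 + α.2 → b α = 0) ∧
    (∀ α : ℕ × ℕ, m < α.1 + α.2 → c α = 0) ∧
    q = (-X) ^ p + ∑ α ∈ Finset.range (m + 1) ×ˢ Finset.range (m + 1),
          C (b α) * (-X) ^ α.1 * (1 + X) ^ α.2 ∧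
    q = ∑ α ∈ Finset.range (m + 1) ×ˢ Finset.range (m + 1),
          C (c α) * X ^ α.1 * (1 - X) ^ α.2 ∧
    r = trFun hM (fun x => q.eval x) ^ (1 / (p : ℝ)) }

open Finset

namespace PSDDistance

section NegPart

variable {p : ℕ}

lemma negPart_nonneg (p : ℕ) (x : ℝ) : 0 ≤ negPart p x := by
  unfold _root_.negPart; split_ifs <;> positivity

lemma negPart_le_abs_pow (p : ℕ) (x : ℝ) : negPart p x ≤ |x| ^ p := by
  unfold _root_.negPart; split_ifs <;> [rfl; positivity]

lemma negPart_of_nonneg {x : ℝ} (hx : 0 ≤ x) : negPart p x = 0 := by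
  simp [_root_.negPart, hx.not_gt]

lemma negPart_of_nonpos (hp : p ≠ 0) {x : ℝ} (hx : x ≤ 0) : negPart p x = (-x) ^ p := by
  rcases hx.lt_or_eq with hx | rfl
  · simp [_root_.negPart, hx, abs_of_neg hx]
  · simp [_root_.negPart, hp]

lemma negPart_eq_max_pow (hp : p ≠ 0) : negPart p = fun x => max (-x) 0 ^ p := by
  ext x
  rcases le_total x 0 with hx | hx
  · rw [negPart_of_nonpos hp hx, max_eq_left (by linarith)]
  · rw [negPart_of_nonneg hx, max_eq_right (by linarith), zero_pow hp]

lemma negPart_antitone (p : ℕ) : Antitone (negPart p) := by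
  intro x y hxy
  unfold _root_.negPart
  split_ifs with hy hx hx
  · exact pow_le_pow_left₀ (abs_nonneg y) (by rw [abs_of_neg hy, abs_of_neg hx]; linarith) p
  · exact absurd (hxy.trans_lt hy) hx
  · positivity
  · rfl

lemma convexOn_negPart (hp : p ≠ 0) : ConvexOn ℝ Set.univ (negPart p) := by
  rw [negPart_eq_max_pow hp]
  exact ((concaveOn_id convex_univ).neg.sup (convexOn_const 0 convex_univ)).pow
    (fun x _ => le_max_right (-x) 0) p

lemma continuous_negPart (hp : p ≠ 0) : Continuous (negPart p) := by
  rw [negPart_eq_max_pow hp]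
  fun_prop

end NegPart

lemma convexOn_abs_pow (p : ℕ) : ConvexOn ℝ Set.univ fun x : ℝ => |x| ^ p :=
  (convexOn_norm convex_univ).pow (fun x _ => norm_nonneg x) p

def handelmanCone (u v : ℝ[X]) (m : ℕ) : AddSubmonoid ℝ[X] where
  carrier := {q | ∃ c : ℕ × ℕ → ℝ, (∀ α, 0 ≤ c α) ∧ (∀ α : ℕ × ℕ, m < α.1 + α.2 → c α = 0) ∧
    q = ∑ α ∈ range (m + 1) ×ˢ range (m + 1), C (c α) * u ^ α.1 * v ^ α.2}
  zero_mem' := ⟨0, fun _ => le_rfl, fun _ _ => rfl, by simp⟩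
  add_mem' := by
    rintro _ _ ⟨c, hc, hcm, rfl⟩ ⟨c', hc', hcm', rfl⟩
    refine ⟨c + c', fun α => add_nonneg (hc α) (hc' α),
      fun α hα => by simp [hcm α hα, hcm' α hα], ?_⟩
    simp only [Pi.add_apply, C_add, add_mul, sum_add_distrib]

section HandelmanCone

variable {u v : ℝ[X]} {m : ℕ} {q : ℝ[X]}

lemma handelmanCone_mono {m m' : ℕ} (h : m ≤ m') : handelmanCone u v m ≤ handelmanCone u v m' := by
  rintro _ ⟨c, hc, hcm, rfl⟩
  refine ⟨c, hc, fun α hα => hcm α (by omega), sum_subset ?_ fun α _ hα => ?_⟩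
  · exact product_subset_product (range_subset_range.2 (by omega)) (range_subset_range.2 (by omega))
  · rw [hcm α (by simp only [mem_product, mem_range, not_and_or, not_lt] at hα; omega)]
    simp

lemma C_mul_pow_mul_pow_mem_handelmanCone {a : ℝ} (ha : 0 ≤ a) {i j : ℕ} (h : i + j ≤ m) :
    C a * u ^ i * v ^ j ∈ handelmanCone u v m := by
  refine ⟨Pi.single (i, j) a, fun α => ?_, fun α hα => ?_, ?_⟩
  · rcases eq_or_ne α (i, j) with rfl | hne <;> simp [*]
  · simp only [Pi.single_apply, ite_eq_right_iff]
    rintro rfl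
    simp at hα
    omega
  · rw [sum_eq_single_of_mem (i, j) (by simp only [mem_product, mem_range]; omega)
      fun α _ hne => by simp [Pi.single_eq_of_ne hne]]
    simp

lemma comp_mem_handelmanCone (w : ℝ[X]) (hq : q ∈ handelmanCone u v m) :
    q.comp w ∈ handelmanCone (u.comp w) (v.comp w) m := by
  obtain ⟨c, hc, hcm, rfl⟩ := hq
  exact ⟨c, hc, hcm, by simp [Polynomial.sum_comp, mul_comp, pow_comp]⟩

lemma natDegree_le_of_mem_handelmanCone (hu : u.natDegree ≤ 1) (hv : v.natDegree ≤ 1)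
    (hq : q ∈ handelmanCone u v m) : q.natDegree ≤ m := by
  obtain ⟨c, -, hcm, rfl⟩ := hq
  refine natDegree_sum_le_of_forall_le _ _ fun α _ => ?_
  by_cases hα : m < α.1 + α.2
  · simp [hcm α hα]
  · calc (C (c α) * u ^ α.1 * v ^ α.2).natDegree
        ≤ (C (c α) * u ^ α.1).natDegree + (v ^ α.2).natDegree := natDegree_mul_le
      _ ≤ α.1 * 1 + α.2 * 1 := add_le_add ((natDegree_C_mul_le _ _).trans
          (natDegree_pow_le_of_le _ hu)) (natDegree_pow_le_of_le _ hv)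
      _ ≤ m := by omega

lemma eval_nonneg_of_mem_handelmanCone {x : ℝ} (hu : 0 ≤ u.eval x) (hv : 0 ≤ v.eval x)
    (hq : q ∈ handelmanCone u v m) : 0 ≤ q.eval x := by
  obtain ⟨c, hc, -, rfl⟩ := hq
  simp only [eval_finsetSum, eval_mul, eval_pow, eval_C]
  exact sum_nonneg fun α _ => by have := hc α; positivity

lemma one_sub_pow_mem_handelmanCone (huv : u + v = 1) :
    1 - u ^ m ∈ handelmanCone u v m := by
  have h1 : (1 : ℝ[X]) = ∑ k ∈ range (m + 1), C (m.choose k : ℝ) * u ^ k * v ^ (m - k) := by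
    rw [← one_pow m, ← huv, add_pow]
    exact sum_congr rfl fun k _ => by rw [← C_eq_natCast]; ring
  rw [h1, sum_range_succ, Nat.choose_self, Nat.sub_self]
  simp only [Nat.cast_one, C_1, one_mul, pow_zero, mul_one, add_sub_cancel_right]
  exact AddSubmonoid.sum_mem _ fun k hk =>
    C_mul_pow_mul_pow_mem_handelmanCone (Nat.cast_nonneg _) (by simp at hk; omega)

end HandelmanCone

section Bernstein

def fallingRatio (n k j : ℕ) : ℝ := ∏ i ∈ range j, ((k : ℝ) - i) / ((n : ℝ) - i)

lemma choose_mul_fallingRatio {n k j : ℕ} (hjk : j ≤ k) (hkn : k ≤ n) :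
    (n.choose k : ℝ) * fallingRatio n k j = (n - j).choose (k - j) := by
  have hcast : ∀ a, j ≤ a → (a.descFactorial j : ℝ) = ∏ i ∈ range j, ((a : ℝ) - i) := by
    intro a ha
    rw [Nat.descFactorial_eq_prod_range, Nat.cast_prod]
    exact prod_congr rfl fun i hi => Nat.cast_sub (by simp at hi; omega)
  have hnat : n.choose k * k.descFactorial j = n.descFactorial j * (n - j).choose (k - j) := by
    rw [Nat.descFactorial_eq_factorial_mul_choose, Nat.descFactorial_eq_factorial_mul_choose,
      mul_left_comm, Nat.choose_mul hjk, mul_assoc]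
  have hpos : (n.descFactorial j : ℝ) ≠ 0 := by
    exact_mod_cast (Nat.descFactorial_pos.2 (hjk.trans hkn)).ne'
  rw [fallingRatio, prod_div_distrib, ← hcast k hjk, ← hcast n (hjk.trans hkn), mul_div_assoc',
    div_eq_iff hpos]
  exact_mod_cast hnat.trans (mul_comm _ _)

lemma fallingRatio_eq_zero {n k j : ℕ} (h : k < j) : fallingRatio n k j = 0 :=
  prod_eq_zero (mem_range.2 h) (by simp)

lemma X_pow_eq_sum_fallingRatio_smul_bernsteinPolynomial {n j : ℕ} (hjn : j ≤ n) :
    (X : ℝ[X]) ^ j = ∑ k ∈ range (n + 1), fallingRatio n k j • bernsteinPolynomial ℝ n k := by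
  obtain ⟨m, rfl⟩ := Nat.exists_eq_add_of_le hjn
  rw [show j + m + 1 = j + (m + 1) by ring, sum_range_add,
    sum_eq_zero fun k hk => by rw [fallingRatio_eq_zero (mem_range.1 hk), zero_smul], zero_add]
  have hterm : ∀ i ∈ range (m + 1), fallingRatio (j + m) (j + i) j •
      bernsteinPolynomial ℝ (j + m) (j + i) =
        X ^ j * (X ^ i * (1 - X) ^ (m - i) * (m.choose i : ℝ[X])) := by
    intro i hi
    have h := choose_mul_fallingRatio (n := j + m) (k := j + i) (j := j) (by omega)
      (by simp at hi; omega)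
    simp only [Nat.add_sub_cancel_left] at h
    rw [bernsteinPolynomial, smul_eq_C_mul, ← C_eq_natCast, ← C_eq_natCast, ← h,
      show j + m - (j + i) = m - i by omega]
    simp only [C_mul, pow_add]
    ring
  rw [sum_congr rfl hterm, ← mul_sum, ← add_pow, add_sub_cancel, one_pow, mul_one]

lemma abs_prod_sub_prod_le {ι : Type*} (s : Finset ι) {f g : ι → ℝ}
    (hf : ∀ i ∈ s, |f i| ≤ 1) (hg : ∀ i ∈ s, |g i| ≤ 1) :
    |∏ i ∈ s, f i - ∏ i ∈ s, g i| ≤ ∑ i ∈ s, |f i - g i| := by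
  classical
  induction s using Finset.induction_on with
  | empty => simp
  | insert a s ha ih =>
    rw [prod_insert ha, prod_insert ha, sum_insert ha]
    have hF : |∏ i ∈ s, f i| ≤ 1 := by
      rw [abs_prod]
      exact prod_le_one (fun i _ => abs_nonneg _) fun i hi => hf i (mem_insert_of_mem hi)
    have hga : |g a| ≤ 1 := hg a (mem_insert_self a s)
    have ih' := ih (fun i hi => hf i (mem_insert_of_mem hi)) fun i hi => hg i (mem_insert_of_mem hi)
    calc |f a * ∏ i ∈ s, f i - g a * ∏ i ∈ s, g i|
        = |(f a - g a) * ∏ i ∈ s, f i + g a * (∏ i ∈ s, f i - ∏ i ∈ s, g i)| := by ring_nf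
      _ ≤ |f a - g a| * |∏ i ∈ s, f i| + |g a| * |∏ i ∈ s, f i - ∏ i ∈ s, g i| := by
          rw [← abs_mul, ← abs_mul]; exact abs_add_le _ _
      _ ≤ |f a - g a| * 1 + 1 * ∑ i ∈ s, |f i - g i| := by gcongr
      _ = _ := by ring

lemma abs_fallingRatio_sub_pow_le {n k j : ℕ} (hkn : k ≤ n) (hjn : 2 * j ≤ n) :
    |fallingRatio n k j - ((k : ℝ) / n) ^ j| ≤ 2 * j ^ 2 / n := by
  have hk : (k : ℝ) ≤ n := by exact_mod_cast hkn
  have hfactor : ∀ i ∈ range j, |((k : ℝ) - i) / (n - i) - k / n| ≤ 2 * j / n ∧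
      |((k : ℝ) - i) / (n - i)| ≤ 1 ∧ |(k : ℝ) / n| ≤ 1 := by
    intro i hi
    have hij : (i : ℝ) + 1 ≤ j := by exact_mod_cast mem_range.1 hi
    have hjn' : 2 * (j : ℝ) ≤ n := by exact_mod_cast hjn
    have hn : (0 : ℝ) < n := by linarith [(i.cast_nonneg : (0 : ℝ) ≤ i)]
    have hni : (0 : ℝ) < n - i := by linarith [(i.cast_nonneg : (0 : ℝ) ≤ i)]
    refine ⟨?_, ?_, ?_⟩
    · rw [div_sub_div _ _ hni.ne' hn.ne', abs_div, abs_of_pos (mul_pos hni hn),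
        div_le_div_iff₀ (mul_pos hni hn) hn,
        show ((k : ℝ) - i) * n - (n - i) * k = -(i * (n - k)) by ring, abs_neg,
        abs_of_nonneg (mul_nonneg i.cast_nonneg (by linarith))]
      have h1 : (i : ℝ) * (n - k) ≤ j * n := by nlinarith [(k.cast_nonneg : (0 : ℝ) ≤ k)]
      have h2 : (j : ℝ) * n ≤ 2 * j * (n - i) := by nlinarith
      nlinarith [mul_le_mul_of_nonneg_right (h1.trans h2) hn.le]
    · rw [abs_div, abs_of_pos hni, div_le_one hni, abs_le]
      constructor <;> linarith [(i.cast_nonneg : (0 : ℝ) ≤ i), (k.cast_nonneg : (0 : ℝ) ≤ k)]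
    · rw [abs_div, abs_of_pos hn, div_le_one hn, abs_of_nonneg k.cast_nonneg]
      exact hk
  calc |fallingRatio n k j - ((k : ℝ) / n) ^ j|
      = |fallingRatio n k j - ∏ _i ∈ range j, (k : ℝ) / n| := by rw [prod_const, card_range]
    _ ≤ ∑ i ∈ range j, |((k : ℝ) - i) / (n - i) - k / n| :=
        abs_prod_sub_prod_le _ (fun i hi => (hfactor i hi).2.1) fun i hi => (hfactor i hi).2.2
    _ ≤ ∑ _i ∈ range j, 2 * (j : ℝ) / n := sum_le_sum fun i hi => (hfactor i hi).1
    _ = 2 * j ^ 2 / n := by rw [sum_const, card_range, nsmul_eq_mul]; ring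

def bernsteinCoeff (q : ℝ[X]) (n k : ℕ) : ℝ :=
  ∑ j ∈ range (q.natDegree + 1), q.coeff j * fallingRatio n k j

lemma eq_sum_bernsteinCoeff_smul {q : ℝ[X]} {n : ℕ} (hn : q.natDegree ≤ n) :
    q = ∑ k ∈ range (n + 1), bernsteinCoeff q n k • bernsteinPolynomial ℝ n k := by
  conv_lhs => rw [as_sum_range_C_mul_X_pow q]
  simp_rw [bernsteinCoeff, sum_smul, ← smul_eq_C_mul]
  rw [sum_comm]
  refine sum_congr rfl fun j hj => ?_
  rw [X_pow_eq_sum_fallingRatio_smul_bernsteinPolynomial (n := n) (by simp at hj; omega), smul_sum]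
  simp_rw [smul_smul]

lemma abs_bernsteinCoeff_sub_eval_le (q : ℝ[X]) {n k : ℕ} (hkn : k ≤ n)
    (hn : 2 * q.natDegree ≤ n) :
    |bernsteinCoeff q n k - q.eval ((k : ℝ) / n)| ≤
      (∑ j ∈ range (q.natDegree + 1), |q.coeff j|) * (2 * q.natDegree ^ 2 / n) := by
  rw [eval_eq_sum_range, bernsteinCoeff, ← sum_sub_distrib, sum_mul]
  refine (abs_sum_le_sum_abs _ _).trans (sum_le_sum fun j hj => ?_)
  have hj : j ≤ q.natDegree := by simp at hj; omega
  rw [← mul_sub, abs_mul]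
  gcongr
  refine (abs_fallingRatio_sub_pow_le hkn (by omega)).trans ?_
  gcongr

theorem exists_mem_handelmanCone_of_pos {q : ℝ[X]} (hq : ∀ x ∈ Set.Icc (0 : ℝ) 1, 0 < q.eval x) :
    ∃ n, q ∈ handelmanCone X (1 - X) n := by
  obtain ⟨x₀, hx₀, hmin⟩ := isCompact_Icc.exists_isMinOn (Set.nonempty_Icc.2 zero_le_one)
    q.continuous.continuousOn
  set d := q.natDegree
  set A := ∑ j ∈ range (d + 1), |q.coeff j|
  obtain ⟨n, hnδ, hnd⟩ := (((tendsto_const_div_atTop_nhds_zero_nat (A * (2 * d ^ 2))).eventually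
    (gt_mem_nhds (hq x₀ hx₀))).and (Filter.eventually_ge_atTop (2 * d + 1))).exists
  refine ⟨n, ?_⟩
  rw [eq_sum_bernsteinCoeff_smul (show d ≤ n by omega)]
  refine AddSubmonoid.sum_mem _ fun k hk => ?_
  have hkn : k ≤ n := by simp at hk; omega
  have hcoeff : 0 ≤ bernsteinCoeff q n k := by
    have hk01 : (k : ℝ) / n ∈ Set.Icc (0 : ℝ) 1 :=
      ⟨by positivity, div_le_one_of_le₀ (by exact_mod_cast hkn) n.cast_nonneg⟩
    have hbound := abs_le.1 (abs_bernsteinCoeff_sub_eval_le q hkn (by omega))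
    have hmin' : q.eval x₀ ≤ q.eval ((k : ℝ) / n) := hmin hk01
    rw [mul_div_assoc] at hnδ
    linarith [hbound.1]
  rw [bernsteinPolynomial, smul_eq_C_mul, ← C_eq_natCast, ← mul_assoc, ← mul_assoc, ← C_mul]
  exact C_mul_pow_mul_pow_mem_handelmanCone (by positivity) (by omega)

end Bernstein

section Spectral

open Matrix

variable {n : Type*} [Fintype n] [DecidableEq n]

lemma sum_comp_mulVec_le_of_mem_doublyStochastic {B : Matrix n n ℝ} (hB : B ∈ doublyStochastic ℝ n)
    {g : ℝ → ℝ} (hg : ConvexOn ℝ Set.univ g) (d : n → ℝ) :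
    ∑ j, g ((B *ᵥ d) j) ≤ ∑ i, g (d i) := by
  obtain ⟨hB0, hrow, hcol⟩ := mem_doublyStochastic_iff_sum.1 hB
  calc ∑ j, g ((B *ᵥ d) j) ≤ ∑ j, ∑ i, B j i * g (d i) := sum_le_sum fun j _ =>
        hg.map_sum_le (fun i _ => hB0 j i) (hrow j) (fun i _ => Set.mem_univ _)
    _ = ∑ i, g (d i) := by rw [sum_comm]; simp_rw [← sum_mul, hcol, one_mul]

lemma normSq_mem_doublyStochastic {U : Matrix n n ℂ} (hU : U ∈ unitaryGroup n ℂ) :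
    of (fun i j => Complex.normSq (U i j)) ∈ doublyStochastic ℝ n := by
  refine mem_doublyStochastic_iff_sum.2
    ⟨fun i j => Complex.normSq_nonneg _, fun i => ?_, fun j => ?_⟩
  · have h := congrFun (congrFun (mem_unitaryGroup_iff.1 hU) i) i
    simp only [mul_apply, star_apply, Complex.star_def, Complex.mul_conj, one_apply_eq] at h
    exact_mod_cast h
  · have h := congrFun (congrFun (mem_unitaryGroup_iff'.1 hU) j) j
    simp only [mul_apply, star_apply, Complex.star_def, mul_comm (starRingEnd ℂ _),
      Complex.mul_conj, one_apply_eq] at h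
    exact_mod_cast h

lemma re_diag_mul_diagonal_mul_star (U : Matrix n n ℂ) (d : n → ℝ) (j : n) :
    ((U * diagonal (RCLike.ofReal ∘ d) * star U : Matrix n n ℂ) j j).re =
      (of (fun i j => Complex.normSq (U i j)) *ᵥ d) j := by
  rw [mul_apply]
  simp only [mul_diagonal, star_apply, Complex.star_def, mulVec, dotProduct, of_apply,
    Function.comp_apply, Complex.re_sum]
  refine sum_congr rfl fun i _ => ?_
  rw [mul_right_comm, Complex.mul_conj]
  simp

/-- Schur: the diagonal of a unitary conjugate of `diagonal d` is majorized by `d`. -/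
lemma sum_comp_re_diag_unitary_conj_le {U : Matrix n n ℂ} (hU : U ∈ unitaryGroup n ℂ)
    {g : ℝ → ℝ} (hg : ConvexOn ℝ Set.univ g) (d : n → ℝ) :
    ∑ j, g ((U * diagonal (RCLike.ofReal ∘ d) * star U : Matrix n n ℂ) j j).re ≤ ∑ i, g (d i) := by
  simp_rw [re_diag_mul_diagonal_mul_star]
  exact sum_comp_mulVec_le_of_mem_doublyStochastic (normSq_mem_doublyStochastic hU) hg d

lemma _root_.Matrix.IsHermitian.eq_eigenvectorUnitary_mul_diagonal {A : Matrix n n ℂ}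
    (hA : A.IsHermitian) :
    A = (hA.eigenvectorUnitary : Matrix n n ℂ) * diagonal (RCLike.ofReal ∘ hA.eigenvalues) *
      star (hA.eigenvectorUnitary : Matrix n n ℂ) := by
  simpa using hA.spectral_theorem

lemma _root_.Matrix.IsHermitian.star_eigenvectorUnitary_mul_mul {A : Matrix n n ℂ}
    (hA : A.IsHermitian) :
    star (hA.eigenvectorUnitary : Matrix n n ℂ) * A * (hA.eigenvectorUnitary : Matrix n n ℂ) =
      diagonal (RCLike.ofReal ∘ hA.eigenvalues) := by
  simpa [Unitary.conjStarAlgAut_star_apply] using hA.conjStarAlgAut_star_eigenvectorUnitary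

end Spectral

section Distance

open Matrix

variable {n : Type*} [Fintype n] [DecidableEq n] {p : ℕ}

lemma negPart_eq_abs_min_pow (hp : p ≠ 0) (x : ℝ) : negPart p x = |min x 0| ^ p := by
  rcases le_total x 0 with hx | hx
  · rw [negPart_of_nonpos hp hx, min_eq_left hx, abs_of_nonpos hx]
  · rw [negPart_of_nonneg hx, min_eq_right hx, abs_zero, zero_pow hp]

lemma sum_negPart_le_sum_abs_pow_sub (hp : p ≠ 0) {M N : Matrix n n ℂ} (hM : M.IsHermitian)
    (hN : N.PosSemidef) :
    ∑ i, negPart p (hM.eigenvalues i) ≤ ∑ j, |(hM.sub hN.isHermitian).eigenvalues j| ^ p := by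
  set hA := hM.sub hN.isHermitian
  set V : Matrix n n ℂ := (hM.eigenvectorUnitary : Matrix n n ℂ)
  set W : Matrix n n ℂ := (hA.eigenvectorUnitary : Matrix n n ℂ)
  set r : n → ℝ := fun j => ((star V * N * V) j j).re
  have hr : ∀ j, 0 ≤ r j := fun j => by
    have h := (star_eq_conjTranspose V ▸ hN.conjTranspose_mul_mul_same V).diag_nonneg (i := j)
    exact (Complex.nonneg_iff.1 h).1
  have hconj : star V * W * diagonal (RCLike.ofReal ∘ hA.eigenvalues) * star (star V * W) =
      diagonal (RCLike.ofReal ∘ hM.eigenvalues) - star V * N * V := by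
    calc _ = star V * (W * diagonal (RCLike.ofReal ∘ hA.eigenvalues) * star W) * V := by
          simp only [star_mul, star_star, mul_assoc]
      _ = _ := by rw [← hA.eq_eigenvectorUnitary_mul_diagonal, mul_sub, sub_mul,
          hM.star_eigenvectorUnitary_mul_mul]
  have hdiag : ∀ j, hM.eigenvalues j - r j =
      ((star V * W * diagonal (RCLike.ofReal ∘ hA.eigenvalues) * star (star V * W) :
        Matrix n n ℂ) j j).re := by
    intro j
    rw [hconj]
    simp [r]
  calc ∑ i, negPart p (hM.eigenvalues i) ≤ ∑ j, negPart p (hM.eigenvalues j - r j) :=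
        sum_le_sum fun j _ => negPart_antitone p (by linarith [hr j])
    _ ≤ ∑ i, negPart p (hA.eigenvalues i) := by
        simp_rw [hdiag]
        exact sum_comp_re_diag_unitary_conj_le
          (mul_mem (Unitary.star_mem hM.eigenvectorUnitary.2) hA.eigenvectorUnitary.2)
          (convexOn_negPart hp) _
    _ ≤ ∑ j, |hA.eigenvalues j| ^ p := sum_le_sum fun j _ => negPart_le_abs_pow p _

lemma exists_posSemidef_sum_abs_pow_sub_le (hp : p ≠ 0) {M : Matrix n n ℂ} (hM : M.IsHermitian) :
    ∃ (N : Matrix n n ℂ) (hN : N.PosSemidef),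
      ∑ j, |(hM.sub hN.isHermitian).eigenvalues j| ^ p ≤ ∑ i, negPart p (hM.eigenvalues i) := by
  set V : Matrix n n ℂ := (hM.eigenvectorUnitary : Matrix n n ℂ)
  have hN :
      (V * diagonal (RCLike.ofReal ∘ fun i => max (hM.eigenvalues i) 0) * star V).PosSemidef := by
    rw [star_eq_conjTranspose]
    exact (posSemidef_diagonal_iff.2 fun i => by simp).mul_mul_conjTranspose_same V
  refine ⟨_, hN, ?_⟩
  set hA := hM.sub hN.isHermitian
  set W : Matrix n n ℂ := (hA.eigenvectorUnitary : Matrix n n ℂ)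
  have hMN : M - V * diagonal (RCLike.ofReal ∘ fun i => max (hM.eigenvalues i) 0) * star V =
      V * diagonal (RCLike.ofReal ∘ fun i => min (hM.eigenvalues i) 0) * star V := by
    rw [congrArg (· - _) hM.eq_eigenvectorUnitary_mul_diagonal, ← sub_mul, ← mul_sub,
      diagonal_sub]
    congr 3
    ext i
    simp only [Function.comp_apply, ← RCLike.ofReal_sub]
    congr 1
    linarith [min_add_max (hM.eigenvalues i) 0]
  have hdiag : ∀ j, hA.eigenvalues j =
      ((star W * V * diagonal (RCLike.ofReal ∘ fun i => min (hM.eigenvalues i) 0) *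
        star (star W * V) : Matrix n n ℂ) j j).re := by
    intro j
    have : star W * V * diagonal (RCLike.ofReal ∘ fun i => min (hM.eigenvalues i) 0) *
        star (star W * V) = diagonal (RCLike.ofReal ∘ hA.eigenvalues) := by
      rw [← hA.star_eigenvectorUnitary_mul_mul]
      change _ = star W * (M - _) * W
      rw [hMN]
      simp only [star_mul, star_star, mul_assoc]
    rw [this]
    simp
  calc ∑ j, |hA.eigenvalues j| ^ p ≤ ∑ i, |min (hM.eigenvalues i) 0| ^ p := by
        simp_rw [hdiag]
        exact sum_comp_re_diag_unitary_conj_le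
          (mul_mem (Unitary.star_mem hA.eigenvectorUnitary.2) hM.eigenvectorUnitary.2)
          (convexOn_abs_pow p) _
    _ = ∑ i, negPart p (hM.eigenvalues i) := by simp_rw [negPart_eq_abs_min_pow hp]

end Distance

section Trace

variable {s : ℕ} {M : Matrix (Fin s) (Fin s) ℂ} (hM : M.IsHermitian)

lemma trFun_nonneg {f : ℝ → ℝ} (h : ∀ i, 0 ≤ f (hM.eigenvalues i)) : 0 ≤ trFun hM f :=
  mul_nonneg (by positivity) (sum_nonneg fun i _ => h i)

lemma trFun_le_add_of_le {f g : ℝ → ℝ} {c : ℝ} (hc : 0 ≤ c)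
    (h : ∀ i, f (hM.eigenvalues i) ≤ g (hM.eigenvalues i) + c) :
    trFun hM f ≤ trFun hM g + c := by
  have hs : (s : ℝ)⁻¹ * s ≤ 1 := by
    rcases s.eq_zero_or_pos with rfl | hs
    · simp
    · rw [inv_mul_cancel₀ (by positivity)]
  calc trFun hM f ≤ (s : ℝ)⁻¹ * ∑ i, (g (hM.eigenvalues i) + c) :=
        mul_le_mul_of_nonneg_left (sum_le_sum fun i _ => h i) (by positivity)
    _ = trFun hM g + (s : ℝ)⁻¹ * s * c := by
        rw [sum_add_distrib, sum_const, card_univ, Fintype.card_fin, nsmul_eq_mul, trFun]; ring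
    _ ≤ trFun hM g + c := by nlinarith

lemma schattenNorm_natCast {A : Matrix (Fin s) (Fin s) ℂ} (hA : A.IsHermitian) (p : ℕ) :
    schattenNorm p hA = trFun hA (fun x => |x| ^ p) ^ (1 / (p : ℝ)) := by
  simp [schattenNorm, trFun, Real.rpow_natCast]

theorem distPSD_eq {p : ℕ} (hp : p ≠ 0) :
    distPSD p hM = trFun hM (_root_.negPart p) ^ (1 / (p : ℝ)) := by
  obtain ⟨N₀, hN₀, hN₀le⟩ := exists_posSemidef_sum_abs_pow_sub_le hp hM
  apply le_antisymm
  · have hbdd : BddBelow {r | ∃ (N : Matrix (Fin s) (Fin s) ℂ) (hN : N.PosSemidef),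
        r = schattenNorm p (hM.sub hN.isHermitian)} := by
      refine ⟨0, ?_⟩
      rintro _ ⟨N, hN, rfl⟩
      exact Real.rpow_nonneg (by positivity) _
    refine (csInf_le hbdd ⟨N₀, hN₀, rfl⟩).trans ?_
    rw [schattenNorm_natCast]
    gcongr
    · exact trFun_nonneg _ fun i => by positivity
    · exact mul_le_mul_of_nonneg_left hN₀le (by positivity)
  · refine le_csInf ⟨_, N₀, hN₀, rfl⟩ ?_
    rintro _ ⟨N, hN, rfl⟩
    rw [schattenNorm_natCast]
    gcongr
    · exact trFun_nonneg _ fun i => negPart_nonneg p _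
    · exact mul_le_mul_of_nonneg_left (sum_negPart_le_sum_abs_pow_sub hp hM hN) (by positivity)

end Trace

section Relaxation

def traceRoot {s : ℕ} {M : Matrix (Fin s) (Fin s) ℂ} (hM : M.IsHermitian) (p : ℕ)
    (q : ℝ[X]) : ℝ :=
  trFun hM (fun x => q.eval x) ^ (1 / (p : ℝ))

def polyMajorants (p m : ℕ) : Set ℝ[X] :=
  {q | q.natDegree ≤ m ∧ ∀ x ∈ Set.Icc (-1 : ℝ) 1, negPart p x ≤ q.eval x}

def handelmanCertified (p m : ℕ) : Set ℝ[X] :=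
  {q | q - (-X) ^ p ∈ handelmanCone (-X) (1 + X) m ∧ q ∈ handelmanCone X (1 - X) m}

variable {p m : ℕ}

lemma handelmanCertified_mono {m' : ℕ} (h : m ≤ m') :
    handelmanCertified p m ⊆ handelmanCertified p m' :=
  fun _ hq => ⟨handelmanCone_mono h hq.1, handelmanCone_mono h hq.2⟩

lemma one_mem_handelmanCertified (hm : p ≤ m) : 1 ∈ handelmanCertified p m := by
  refine ⟨handelmanCone_mono hm (one_sub_pow_mem_handelmanCone (by ring)), ?_⟩
  simpa using C_mul_pow_mul_pow_mem_handelmanCone (u := X) (v := 1 - X) (i := 0) (j := 0)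
    zero_le_one (Nat.zero_le m)

lemma handelmanCertified_subset_polyMajorants (hp : p ≠ 0) :
    handelmanCertified p m ⊆ polyMajorants p m := by
  rintro q ⟨hneg, hpos⟩
  refine ⟨natDegree_le_of_mem_handelmanCone natDegree_X_le
    ((natDegree_sub_le _ _).trans (by simp)) hpos, fun x hx => ?_⟩
  rcases le_total x 0 with h | h
  · have := eval_nonneg_of_mem_handelmanCone (x := x) (by simpa using h)
      (by rw [eval_add, eval_one, eval_X]; linarith [hx.1]) hneg
    rw [negPart_of_nonpos hp h]
    simpa using this
  · rw [negPart_of_nonneg h]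
    exact eval_nonneg_of_mem_handelmanCone (by simpa using h) (by simpa using hx.2) hpos

variable {s : ℕ} {M : Matrix (Fin s) (Fin s) ℂ} (hM : M.IsHermitian)

lemma dplus_eq_sInf_image :
    dplus p m hM = sInf (traceRoot hM p '' polyMajorants p m) := by
  rw [dplus]
  congr 1
  ext r
  exact ⟨fun ⟨q, hdeg, hge, hr⟩ => ⟨q, ⟨hdeg, hge⟩, hr.symm⟩,
    fun ⟨q, ⟨hdeg, hge⟩, hr⟩ => ⟨q, hdeg, hge, hr.symm⟩⟩

lemma handel_eq_sInf_image :
    handel p m hM = sInf (traceRoot hM p '' handelmanCertified p m) := by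
  rw [handel]
  congr 1
  ext r
  constructor
  · rintro ⟨q, b, c, hb, hc, hbm, hcm, hqb, hqc, rfl⟩
    exact ⟨q, ⟨⟨b, hb, hbm, sub_eq_iff_eq_add'.2 hqb⟩, ⟨c, hc, hcm, hqc⟩⟩, rfl⟩
  · rintro ⟨q, ⟨⟨b, hb, hbm, hqb⟩, ⟨c, hc, hcm, hqc⟩⟩, rfl⟩
    exact ⟨q, b, c, hb, hc, hbm, hcm, sub_eq_iff_eq_add'.1 hqb, hqc, rfl⟩

variable {hM}

lemma rpow_trFun_negPart_le_traceRoot (hspec : ∀ i, hM.eigenvalues i ∈ Set.Icc (-1 : ℝ) 1)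
    {q : ℝ[X]} (hq : q ∈ polyMajorants p m) :
    trFun hM (_root_.negPart p) ^ (1 / (p : ℝ)) ≤ traceRoot hM p q :=
  Real.rpow_le_rpow (trFun_nonneg hM fun i => negPart_nonneg p _)
    (mul_le_mul_of_nonneg_left (sum_le_sum fun i _ => hq.2 _ (hspec i)) (by positivity))
    (by positivity)

lemma bddBelow_traceRoot_image (hspec : ∀ i, hM.eigenvalues i ∈ Set.Icc (-1 : ℝ) 1)
    {S : Set ℝ[X]} (hS : S ⊆ polyMajorants p m) : BddBelow (traceRoot hM p '' S) :=
  ⟨_, Set.forall_mem_image.2 fun _ hq => rpow_trFun_negPart_le_traceRoot hspec (hS hq)⟩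

lemma rpow_trFun_negPart_le_dplus (hp : p ≠ 0) (hspec : ∀ i, hM.eigenvalues i ∈ Set.Icc (-1 : ℝ) 1)
    (hm : p ≤ m) : trFun hM (_root_.negPart p) ^ (1 / (p : ℝ)) ≤ dplus p m hM := by
  rw [dplus_eq_sInf_image]
  exact le_csInf ⟨_, Set.mem_image_of_mem _
    (handelmanCertified_subset_polyMajorants hp (one_mem_handelmanCertified hm))⟩
    (Set.forall_mem_image.2 fun _ hq => rpow_trFun_negPart_le_traceRoot hspec hq)

lemma dplus_le_handel (hp : p ≠ 0) (hspec : ∀ i, hM.eigenvalues i ∈ Set.Icc (-1 : ℝ) 1)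
    (hm : p ≤ m) : dplus p m hM ≤ handel p m hM := by
  rw [dplus_eq_sInf_image, handel_eq_sInf_image]
  exact csInf_le_csInf (bddBelow_traceRoot_image hspec subset_rfl)
    ⟨_, Set.mem_image_of_mem _ (one_mem_handelmanCertified hm)⟩
    (Set.image_mono (handelmanCertified_subset_polyMajorants hp))

lemma handel_le_traceRoot (hp : p ≠ 0) (hspec : ∀ i, hM.eigenvalues i ∈ Set.Icc (-1 : ℝ) 1)
    {q : ℝ[X]} (hq : q ∈ handelmanCertified p m) : handel p m hM ≤ traceRoot hM p q := by
  rw [handel_eq_sInf_image]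
  exact csInf_le (bddBelow_traceRoot_image hspec (handelmanCertified_subset_polyMajorants hp))
    (Set.mem_image_of_mem _ hq)

lemma handel_antitone (hp : p ≠ 0) (hspec : ∀ i, hM.eigenvalues i ∈ Set.Icc (-1 : ℝ) 1)
    {m₁ m₂ : ℕ} (h₁ : p ≤ m₁) (h₁₂ : m₁ ≤ m₂) : handel p m₂ hM ≤ handel p m₁ hM := by
  rw [handel_eq_sInf_image, handel_eq_sInf_image]
  exact csInf_le_csInf
    (bddBelow_traceRoot_image hspec (handelmanCertified_subset_polyMajorants hp))
    ⟨_, Set.mem_image_of_mem _ (one_mem_handelmanCertified h₁)⟩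
    (Set.image_mono (handelmanCertified_mono h₁₂))

end Relaxation

lemma exists_mem_handelmanCertified_le {p : ℕ} (hp : p ≠ 0) {ε : ℝ} (hε : 0 < ε) :
    ∃ m, ∃ q ∈ handelmanCertified p m, ∀ x ∈ Set.Icc (-1 : ℝ) 1, q.eval x ≤ negPart p x + ε := by
  obtain ⟨r, hr⟩ := exists_polynomial_near_of_continuousOn (-1) 1 (_root_.negPart p)
    (continuous_negPart hp).continuousOn (ε / 2) (half_pos hε)
  set q := r + C (ε / 2)
  have hq : ∀ x ∈ Set.Icc (-1 : ℝ) 1, negPart p x < q.eval x ∧ q.eval x ≤ negPart p x + ε := by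
    intro x hx
    have := abs_lt.1 (hr x hx)
    simp only [q, eval_add, eval_C]
    constructor <;> linarith
  obtain ⟨m₁, hm₁⟩ := exists_mem_handelmanCone_of_pos (q := q) fun x hx =>
    (negPart_nonneg p x).trans_lt (hq x ⟨by linarith [hx.1], hx.2⟩).1
  obtain ⟨m₂, hm₂⟩ := exists_mem_handelmanCone_of_pos (q := (q - (-X) ^ p).comp (-X)) fun x hx => by
    have := (hq (-x) ⟨by linarith [hx.2], by linarith [hx.1]⟩).1
    rw [negPart_of_nonpos hp (by linarith [hx.1]), neg_neg] at this
    simpa using this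
  refine ⟨max m₁ m₂, q, ⟨?_, handelmanCone_mono (le_max_left _ _) hm₁⟩, fun x hx => (hq x hx).2⟩
  have := comp_mem_handelmanCone (-X) (handelmanCone_mono (le_max_right m₁ m₂) hm₂)
  simpa [comp_assoc, sub_eq_add_neg, add_comm] using this

theorem tendsto_handel {p : ℕ} (hp : p ≠ 0) {s : ℕ} {M : Matrix (Fin s) (Fin s) ℂ}
    {hM : M.IsHermitian} (hspec : ∀ i, hM.eigenvalues i ∈ Set.Icc (-1 : ℝ) 1) :
    Filter.Tendsto (fun m => handel p m hM) Filter.atTop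
      (nhds (trFun hM (_root_.negPart p) ^ (1 / (p : ℝ)))) := by
  set F := trFun hM (_root_.negPart p)
  refine tendsto_order.2 ⟨fun a ha => Filter.eventually_atTop.2 ⟨p, fun m hm =>
    ha.trans_le ((rpow_trFun_negPart_le_dplus hp hspec hm).trans (dplus_le_handel hp hspec hm))⟩,
    fun b hb => ?_⟩
  have hcont : Filter.Tendsto (fun ε => (F + ε) ^ (1 / (p : ℝ))) (nhds 0)
      (nhds (F ^ (1 / (p : ℝ)))) := by
    simpa using ((continuous_const.add continuous_id).rpow_const
      fun _ => Or.inr (by positivity)).tendsto (0 : ℝ)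
  obtain ⟨ε, hεb, hε⟩ := (((hcont.eventually (gt_mem_nhds hb)).filter_mono nhdsWithin_le_nhds).and
    (self_mem_nhdsWithin (s := Set.Ioi 0))).exists
  obtain ⟨m₀, q, hq, hqε⟩ := exists_mem_handelmanCertified_le hp hε
  refine Filter.eventually_atTop.2 ⟨max m₀ p, fun m hm => ?_⟩
  calc handel p m hM
      ≤ traceRoot hM p q :=
        handel_le_traceRoot hp hspec (handelmanCertified_mono (le_of_max_le_left hm) hq)
    _ ≤ (F + ε) ^ (1 / (p : ℝ)) := by
        refine Real.rpow_le_rpow ?_ (trFun_le_add_of_le hM hε.le fun i => hqε _ (hspec i))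
          (by positivity)
        exact trFun_nonneg hM fun i => (negPart_nonneg p _).trans
          ((handelmanCertified_subset_polyMajorants hp hq).2 _ (hspec i))
    _ < b := hεb

end PSDDistance

/-- the Handelman bounds `D_m(M)` satisfy
`d_p(M) ≤ d⁺_{p,m}(M) ≤ D_m(M)` for all `m ≥ p`, they are monotonically
nonincreasing in `m`, and they converge to `d_p(M)` as `m → ∞`. -/
theorem statement16 (s : ℕ) (p : ℕ) (hp : 1 ≤ p)
    (M : Matrix (Fin s) (Fin s) ℂ) (hM : M.IsHermitian)
    (hnorm : ∀ i, |hM.eigenvalues i| ≤ 1) :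
    (∀ m, p ≤ m →
      distPSD (p : ℝ) hM ≤ dplus p m hM ∧ dplus p m hM ≤ handel p m hM) ∧
    (∀ m₁ m₂, p ≤ m₁ → m₁ ≤ m₂ → handel p m₂ hM ≤ handel p m₁ hM) ∧
    Filter.Tendsto (fun m => handel p m hM) Filter.atTop
      (nhds (distPSD (p : ℝ) hM)) := by
  open PSDDistance in
  have hp0 : p ≠ 0 := by omega
  have hspec : ∀ i, hM.eigenvalues i ∈ Set.Icc (-1 : ℝ) 1 := fun i => abs_le.1 (hnorm i)
  rw [distPSD_eq hM hp0]
  exact ⟨fun m hm => ⟨rpow_trFun_negPart_le_dplus hp0 hspec hm, dplus_le_handel hp0 hspec hm⟩,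
    fun m₁ m₂ h₁ h₁₂ => handel_antitone hp0 hspec h₁ h₁₂, tendsto_handel hp0 hspec⟩

end
end

section
/- If q ∈ ℝ[x] satisfies q(x) > 0 for all x ∈ [0,1], then there exist nonnegative real numbers a_α for α = (α₁,α₂) ∈ ℕ², only finitely many of which are nonzero, such that q(x) = Σ_α a_α·x^{α₁}·(1−x)^{α₂} as polynomials. -/
open Polynomial Finset
open scoped Nat

/-!
Expanding `X ^ j = ∑ₖ (C(k,j) / C(n,j)) b_{n,k}` writes `q` in the Bernstein basis
`b_{n,k} = C(n,k) X^k (1-X)^(n-k)` of any degree `n ≥ deg q`, with coefficients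
`∑ⱼ q_j C(k,j) / C(n,j)`. Since `C(k,j) / C(n,j) = ∏_{i<j} (k-i)/(n-i)` is within `j² / (n-j)`
of `(k/n)^j`, these coefficients are within `O(deg q ² / n)` of `q(k/n)`, so they are all
nonnegative for large `n`, as `q` has a positive minimum on `[0,1]`. Each `b_{n,k}` is a
nonnegative multiple of `X^k (1-X)^(n-k)`.
-/

theorem Finset.norm_prod_sub_prod_le {ι R : Type*} [NormedCommRing R] [NormOneClass R]
    (s : Finset ι) {f g : ι → R} (hf : ∀ i ∈ s, ‖f i‖ ≤ 1) (hg : ∀ i ∈ s, ‖g i‖ ≤ 1) :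
    ‖∏ i ∈ s, f i - ∏ i ∈ s, g i‖ ≤ ∑ i ∈ s, ‖f i - g i‖ := by
  classical
  induction s using Finset.induction_on with
  | empty => simp
  | insert a s ha ih =>
    rw [forall_mem_insert] at hf hg
    rw [prod_insert ha, prod_insert ha, sum_insert ha]
    have hF : ‖∏ i ∈ s, f i‖ ≤ 1 :=
      (Finset.norm_prod_le s f).trans (prod_le_one (fun _ _ ↦ norm_nonneg _) hf.2)
    calc ‖f a * ∏ i ∈ s, f i - g a * ∏ i ∈ s, g i‖
        = ‖(f a - g a) * ∏ i ∈ s, f i + g a * (∏ i ∈ s, f i - ∏ i ∈ s, g i)‖ := by ring_nf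
      _ ≤ ‖f a - g a‖ * ‖∏ i ∈ s, f i‖ + ‖g a‖ * ‖∏ i ∈ s, f i - ∏ i ∈ s, g i‖ :=
        norm_add_le_of_le (norm_mul_le _ _) (norm_mul_le _ _)
      _ ≤ ‖f a - g a‖ * 1 + 1 * ∑ i ∈ s, ‖f i - g i‖ := by
        gcongr
        exacts [hg.1, ih hf.2 hg.2]
      _ = ‖f a - g a‖ + ∑ i ∈ s, ‖f i - g i‖ := by ring

theorem Nat.cast_choose_mul_factorial {R : Type*} [CommRing R] (k j : ℕ) :
    (k.choose j : R) * j ! = ∏ i ∈ range j, ((k : R) - i) := by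
  rw [← descPochhammer_eval_eq_prod_range, descPochhammer_eval_eq_descFactorial,
    Nat.descFactorial_eq_factorial_mul_choose, Nat.cast_mul, mul_comm]

-- No `j ≤ n` needed: for `n < j` both sides are `0`, the right through the factor `· / (n - n)`.
theorem Nat.cast_choose_div_cast_choose {K : Type*} [Field K] [CharZero K] (k n j : ℕ) :
    (k.choose j : K) / n.choose j = ∏ i ∈ range j, ((k : K) - i) / ((n : K) - i) := by
  have hfac : (j ! : K) ≠ 0 := by exact_mod_cast j.factorial_ne_zero
  rw [prod_div_distrib, ← Nat.cast_choose_mul_factorial, ← Nat.cast_choose_mul_factorial,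
    mul_div_mul_right _ _ hfac]

namespace bernsteinPolynomial

variable {R : Type*} [CommRing R]

theorem sum_choose_smul {n j : ℕ} (hj : j ≤ n) :
    ∑ k ∈ range (n + 1), k.choose j • bernsteinPolynomial R n k = n.choose j • X ^ j := by
  obtain ⟨m, rfl⟩ := Nat.exists_eq_add_of_le hj
  rw [add_assoc, sum_range_add, sum_eq_zero fun k hk ↦ by
    rw [Nat.choose_eq_zero_of_lt (mem_range.1 hk), zero_smul], zero_add]
  have hbinom := add_pow (X : R[X]) (1 - X) m
  rw [add_sub_cancel, one_pow] at hbinom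
  rw [← mul_one (X ^ j), hbinom, mul_sum, smul_sum]
  refine sum_congr rfl fun i _ ↦ ?_
  have hcoef : (j + i).choose j * (j + m).choose (j + i) = (j + m).choose j * m.choose i := by
    simpa [mul_comm] using Nat.choose_mul (n := j + m) (k := j + i) (s := j) (by omega)
  rw [bernsteinPolynomial, nsmul_eq_mul, nsmul_eq_mul, Nat.add_sub_add_left, pow_add]
  have hcoef' := congrArg (Nat.cast : ℕ → R[X]) hcoef
  push_cast at hcoef'
  linear_combination (X ^ j * X ^ i * (1 - X) ^ (m - i)) * hcoef'

variable {K : Type*} [Field K] [CharZero K]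

theorem X_pow_eq_sum {n j : ℕ} (hj : j ≤ n) :
    (X : K[X]) ^ j =
      ∑ k ∈ range (n + 1), ((k.choose j : K) / n.choose j) • bernsteinPolynomial K n k := by
  have hc : (n.choose j : K) ≠ 0 := by exact_mod_cast (Nat.choose_pos hj).ne'
  calc (X : K[X]) ^ j = (n.choose j : K)⁻¹ • (n.choose j • X ^ j) := by
        rw [← Nat.cast_smul_eq_nsmul K, inv_smul_smul₀ hc]
    _ = ∑ k ∈ range (n + 1), ((k.choose j : K) / n.choose j) • bernsteinPolynomial K n k := by
        simp_rw [← sum_choose_smul hj, smul_sum, ← Nat.cast_smul_eq_nsmul K, smul_smul,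
          inv_mul_eq_div]

end bernsteinPolynomial

namespace Polynomial

variable {K : Type*} [Field K] [CharZero K]

noncomputable def bernsteinCoeff (q : K[X]) (n k : ℕ) : K :=
  ∑ j ∈ range (q.natDegree + 1), q.coeff j * ((k.choose j : K) / n.choose j)

theorem eq_sum_bernsteinCoeff_smul (q : K[X]) {n : ℕ} (hq : q.natDegree ≤ n) :
    q = ∑ k ∈ range (n + 1), q.bernsteinCoeff n k • bernsteinPolynomial K n k := by
  conv_lhs => rw [q.as_sum_range_C_mul_X_pow]
  simp_rw [bernsteinCoeff, sum_smul, mul_smul]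
  rw [sum_comm]
  refine sum_congr rfl fun j hj ↦ ?_
  rw [← smul_sum, ← bernsteinPolynomial.X_pow_eq_sum ((mem_range_succ_iff.1 hj).trans hq), C_mul']

end Polynomial

theorem abs_sub_div_sub_sub_div_le {k n i : ℝ} (hk : 0 ≤ k) (hkn : k ≤ n) (hi : 0 ≤ i)
    (hin : i < n) : |(k - i) / (n - i) - k / n| ≤ i / (n - i) := by
  have hn : 0 < n := hi.trans_lt hin
  have hni : 0 < n - i := sub_pos.2 hin
  rw [div_sub_div _ _ hni.ne' hn.ne', abs_div, abs_of_pos (mul_pos hni hn),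
    div_le_div_iff₀ (mul_pos hni hn) hni,
    show (k - i) * n - (n - i) * k = -(i * (n - k)) by ring, abs_neg,
    abs_of_nonneg (mul_nonneg hi (sub_nonneg.2 hkn))]
  nlinarith [mul_nonneg (mul_nonneg hi hk) hni.le]

theorem abs_choose_div_choose_sub_pow_le {n j : ℕ} (k : ℕ) (hj : j < n) (hk : k ≤ n) :
    |(k.choose j : ℝ) / n.choose j - ((k : ℝ) / n) ^ j| ≤ (j : ℝ) ^ 2 / ((n : ℝ) - j) := by
  have hn : (0 : ℝ) < n := by exact_mod_cast (Nat.zero_le j).trans_lt hj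
  have hjn : (j : ℝ) < n := by exact_mod_cast hj
  have hkn : (k : ℝ) ≤ n := by exact_mod_cast hk
  have hnj : (0 : ℝ) < n - j := sub_pos.2 hjn
  have hkn1 : (k : ℝ) / n ≤ 1 := div_le_one_of_le₀ hkn hn.le
  rcases le_or_gt j k with hjk | hkj
  · have hfactor : ∀ i ∈ range j, ‖((k : ℝ) - i) / (n - i)‖ ≤ 1 := by
      intro i hi
      have hik : (i : ℝ) ≤ k := by exact_mod_cast ((mem_range.1 hi).le.trans hjk)
      have hin : (i : ℝ) < n := by exact_mod_cast (mem_range.1 hi).trans hj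
      rw [Real.norm_eq_abs, abs_of_nonneg (div_nonneg (by linarith) (by linarith))]
      exact div_le_one_of_le₀ (by linarith) (by linarith)
    have hratio : ∀ i ∈ range j, ‖(k : ℝ) / n‖ ≤ 1 := fun _ _ ↦ by
      rwa [Real.norm_eq_abs, abs_of_nonneg (by positivity)]
    have hpow : ((k : ℝ) / n) ^ j = ∏ _i ∈ range j, (k : ℝ) / n := by rw [prod_const, card_range]
    rw [Nat.cast_choose_div_cast_choose, hpow]
    calc _ ≤ ∑ i ∈ range j, |((k : ℝ) - i) / (n - i) - k / n| := by
          simpa only [Real.norm_eq_abs] using Finset.norm_prod_sub_prod_le (range j) hfactor hratio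
      _ ≤ ∑ _i ∈ range j, (j : ℝ) / (n - j) := by
          refine sum_le_sum fun i hi ↦ ?_
          have hij : (i : ℝ) ≤ j := by exact_mod_cast (mem_range.1 hi).le
          calc _ ≤ (i : ℝ) / (n - i) :=
                abs_sub_div_sub_sub_div_le k.cast_nonneg hkn i.cast_nonneg (hij.trans_lt hjn)
            _ ≤ (j : ℝ) / (n - j) := by gcongr
      _ = (j : ℝ) ^ 2 / (n - j) := by rw [sum_const, card_range, nsmul_eq_mul, mul_div_assoc', sq]
  · have hj1 : (1 : ℝ) ≤ j := by exact_mod_cast (k.zero_le.trans_lt hkj)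
    have hkj' : (k : ℝ) ≤ j := by exact_mod_cast hkj.le
    rw [Nat.choose_eq_zero_of_lt hkj, Nat.cast_zero, zero_div, zero_sub, abs_neg,
      abs_of_nonneg (by positivity)]
    calc ((k : ℝ) / n) ^ j ≤ k / n := pow_le_of_le_one (by positivity) hkn1 (by omega)
      _ ≤ j / (n - j) := div_le_div₀ (by positivity) hkj' hnj (by linarith)
      _ ≤ (j : ℝ) ^ 2 / (n - j) := by gcongr; nlinarith

namespace Polynomial

theorem abs_bernsteinCoeff_sub_eval_le (q : ℝ[X]) {n k : ℕ} (hn : q.natDegree < n) (hk : k ≤ n) :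
    |q.bernsteinCoeff n k - q.eval ((k : ℝ) / n)| ≤
      (∑ j ∈ range (q.natDegree + 1), |q.coeff j|) *
        ((q.natDegree : ℝ) ^ 2 / ((n : ℝ) - q.natDegree)) := by
  have hnd : (0 : ℝ) < n - q.natDegree := sub_pos.2 (by exact_mod_cast hn)
  rw [eval_eq_sum_range, bernsteinCoeff, ← sum_sub_distrib, sum_mul]
  refine (abs_sum_le_sum_abs _ _).trans (sum_le_sum fun j hj ↦ ?_)
  have hjd : j ≤ q.natDegree := mem_range_succ_iff.1 hj
  rw [← mul_sub, abs_mul]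
  gcongr
  calc _ ≤ (j : ℝ) ^ 2 / ((n : ℝ) - j) := abs_choose_div_choose_sub_pow_le k (hjd.trans_lt hn) hk
    _ ≤ (q.natDegree : ℝ) ^ 2 / ((n : ℝ) - q.natDegree) := by gcongr

theorem exists_forall_bernsteinCoeff_nonneg {q : ℝ[X]}
    (hq : ∀ x ∈ Set.Icc (0 : ℝ) 1, 0 < q.eval x) :
    ∃ n, q.natDegree ≤ n ∧ ∀ k ≤ n, 0 ≤ q.bernsteinCoeff n k := by
  set d := q.natDegree
  set M := ∑ j ∈ range (d + 1), |q.coeff j|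
  obtain ⟨x₀, hx₀, hmin⟩ :=
    isCompact_Icc.exists_isMinOn (Set.nonempty_Icc.2 zero_le_one) q.continuous.continuousOn
  have hδ := hq x₀ hx₀
  obtain ⟨m, hm⟩ := exists_nat_gt (M * d ^ 2 / q.eval x₀)
  have hm0 : (0 : ℝ) < m := lt_of_le_of_lt (by positivity) hm
  have hm0' : 0 < m := by exact_mod_cast hm0
  refine ⟨d + m, by omega, fun k hk ↦ ?_⟩
  have hmem : (k : ℝ) / (d + m : ℕ) ∈ Set.Icc (0 : ℝ) 1 :=
    ⟨by positivity, div_le_one_of_le₀ (by exact_mod_cast hk) (by positivity)⟩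
  have herr := abs_bernsteinCoeff_sub_eval_le q (n := d + m) (by omega) hk
  have hsmall : M * ((d : ℝ) ^ 2 / ((d + m : ℕ) - d)) < q.eval x₀ := by
    rw [Nat.cast_add, add_sub_cancel_left, mul_div_assoc', div_lt_iff₀ hm0]
    rw [div_lt_iff₀ hδ] at hm
    linarith
  linarith [(abs_lt.1 (herr.trans_lt hsmall)).1, isMinOn_iff.1 hmin _ hmem]

end Polynomial

theorem exists_finsupp_nonneg_sum_eq_sum_bernsteinPolynomial (n : ℕ) {c : ℕ → ℝ}
    (hc : ∀ k ≤ n, 0 ≤ c k) :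
    ∃ a : (ℕ × ℕ) →₀ ℝ, (∀ α, 0 ≤ a α) ∧
      ∑ k ∈ range (n + 1), c k • bernsteinPolynomial ℝ n k =
        a.sum fun α r ↦ C r * X ^ α.1 * (1 - X) ^ α.2 := by
  refine ⟨∑ k ∈ range (n + 1), Finsupp.single (k, n - k) (c k * n.choose k), fun α ↦ ?_, ?_⟩
  · rw [Finsupp.finsetSum_apply]
    refine sum_nonneg fun k hk ↦ ?_
    rw [Finsupp.single_apply]
    split_ifs
    exacts [mul_nonneg (hc k (mem_range_succ_iff.1 hk)) (Nat.cast_nonneg _), le_rfl]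
  · rw [← Finsupp.sum_finsetSum_index (by simp) (by simp [add_mul])]
    refine sum_congr rfl fun k _ ↦ ?_
    rw [Finsupp.sum_single_index (by simp), bernsteinPolynomial, smul_eq_C_mul, C_mul,
      ← C_eq_natCast]
    ring

/-- Handelman's theorem on `[0,1]`: a real polynomial strictly positive
on `[0,1]` is a finite nonnegative combination of the monomials `x^{α₁} (1-x)^{α₂}`. -/
theorem statement17 (q : Polynomial ℝ) (hq : ∀ x ∈ Set.Icc (0 : ℝ) 1, 0 < q.eval x) :
    ∃ a : (ℕ × ℕ) →₀ ℝ, (∀ α, 0 ≤ a α) ∧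
      q = a.sum fun α r => C r * X ^ α.1 * (1 - X) ^ α.2 := by
  obtain ⟨n, hdeg, hc⟩ := exists_forall_bernsteinCoeff_nonneg hq
  obtain ⟨a, ha, hsum⟩ := exists_finsupp_nonneg_sum_eq_sum_bernsteinPolynomial n hc
  exact ⟨a, ha, (q.eq_sum_bernsteinCoeff_smul hdeg).trans hsum⟩
end

section
/- Let m ∈ ℕ and let q ∈ ℝ[x] with deg q ≤ m be nonnegative on [0,1]. Then there exist polynomials σ₀, σ₁, σ₂, σ₃ ∈ ℝ[x], each a sum of squares of real polynomials, such that q(x) = σ₀(x) + σ₁(x)·x + σ₂(x)·(1−x) + σ₃(x)·x·(1−x), and the degrees can be chosen so that each of the four summands σ₀, σ₁·x, σ₂·(1−x), σ₃·x·(1−x) has degree at most m. -/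
/-!
Write `Tₙ(g₁, g₂)` for the polynomials `σ₀ + σ₁ g₁ + σ₂ g₂ + σ₃ g₁ g₂` with sums of squares `σᵢ`
and every summand of degree at most `n`. Since `g^i g^j = (g^(i j))² g^(i + j)` for exponent
pairs `i, j` taken mod 2, we get `Tₘ · Tₙ ⊆ Tₘ₊ₙ`. For `g₁ = x`, `g₂ = 1 - x` one then splits off
one real irreducible factor of `q` at a time: a positive definite quadratic is a sum of squares,
`x - r ∈ T₁` for `r ≤ 0` and `r - x ∈ T₁` for `r ≥ 1`, and a root `r ∈ (0, 1)` has even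
multiplicity, so `(x - r)²` splits off. The cofactor is again nonnegative on `[0, 1]`, and the
degrees add up exactly.
-/

open Polynomial Set

theorem pow_val_mul_pow_val {M : Type*} [CommMonoid M] (t : M) (a b : Fin 2) :
    t ^ (a : ℕ) * t ^ (b : ℕ) = (t ^ ((a * b : Fin 2) : ℕ)) ^ 2 * t ^ ((a + b : Fin 2) : ℕ) := by
  fin_cases a <;> fin_cases b <;> simp [sq]

section TruncatedPreordering

variable {R : Type*} [CommSemiring R] (g₁ g₂ : R[X])

/-- Exponents live in `Fin 2`, so that adding them multiplies generators up to a square. -/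
noncomputable def preorderingGen (i : Fin 2 × Fin 2) : R[X] := g₁ ^ (i.1 : ℕ) * g₂ ^ (i.2 : ℕ)

theorem preorderingGen_mul_preorderingGen (i j : Fin 2 × Fin 2) :
    preorderingGen g₁ g₂ i * preorderingGen g₁ g₂ j =
      preorderingGen g₁ g₂ (i * j) ^ 2 * preorderingGen g₁ g₂ (i + j) := by
  have h₁ := pow_val_mul_pow_val g₁ i.1 j.1
  have h₂ := pow_val_mul_pow_val g₂ i.2 j.2
  calc preorderingGen g₁ g₂ i * preorderingGen g₁ g₂ j
      = (g₁ ^ (i.1 : ℕ) * g₁ ^ (j.1 : ℕ)) * (g₂ ^ (i.2 : ℕ) * g₂ ^ (j.2 : ℕ)) := by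
        simp only [preorderingGen]; ring
    _ = _ := by
        simp only [h₁, h₂, preorderingGen, Prod.fst_mul, Prod.snd_mul, Prod.fst_add,
          Prod.snd_add]
        ring

def MemTruncatedPreordering (n : ℕ) (q : R[X]) : Prop :=
  ∃ σ : Fin 2 × Fin 2 → R[X], (∀ i, IsSumSq (σ i)) ∧
    (∀ i, (σ i * preorderingGen g₁ g₂ i).natDegree ≤ n) ∧ q = ∑ i, σ i * preorderingGen g₁ g₂ i

theorem sum_mul_preorderingGen (σ : Fin 2 × Fin 2 → R[X]) :
    ∑ i, σ i * preorderingGen g₁ g₂ i =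
      σ (0, 0) + σ (1, 0) * g₁ + σ (0, 1) * g₂ + σ (1, 1) * (g₁ * g₂) := by
  simp only [preorderingGen, Fintype.sum_prod_type, Fin.sum_univ_two, Fin.isValue,
    Fin.coe_ofNat_eq_mod, Nat.zero_mod, pow_zero, mul_one, Nat.mod_succ, pow_one, one_mul]
  ring

variable {g₁ g₂}

theorem memTruncatedPreordering_iff {n : ℕ} {q : R[X]} :
    MemTruncatedPreordering g₁ g₂ n q ↔ ∃ σ₀ σ₁ σ₂ σ₃ : R[X],
      IsSumSq σ₀ ∧ IsSumSq σ₁ ∧ IsSumSq σ₂ ∧ IsSumSq σ₃ ∧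
      q = σ₀ + σ₁ * g₁ + σ₂ * g₂ + σ₃ * (g₁ * g₂) ∧
      σ₀.natDegree ≤ n ∧ (σ₁ * g₁).natDegree ≤ n ∧
      (σ₂ * g₂).natDegree ≤ n ∧ (σ₃ * (g₁ * g₂)).natDegree ≤ n := by
  constructor
  · rintro ⟨σ, hσ, hdeg, rfl⟩
    refine ⟨σ (0, 0), σ (1, 0), σ (0, 1), σ (1, 1), hσ _, hσ _, hσ _, hσ _, ?_, ?_, ?_, ?_, ?_⟩
    · exact sum_mul_preorderingGen g₁ g₂ σ
    · simpa [preorderingGen] using hdeg (0, 0)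
    · simpa [preorderingGen] using hdeg (1, 0)
    · simpa [preorderingGen] using hdeg (0, 1)
    · simpa [preorderingGen] using hdeg (1, 1)
  · rintro ⟨σ₀, σ₁, σ₂, σ₃, h₀, h₁, h₂, h₃, rfl, d₀, d₁, d₂, d₃⟩
    refine ⟨fun i => ![![σ₀, σ₂], ![σ₁, σ₃]] i.1 i.2, ?_, ?_, ?_⟩
    · simp [Prod.forall, Fin.forall_fin_two, *]
    · simp [Prod.forall, Fin.forall_fin_two, preorderingGen, *]
    · rw [sum_mul_preorderingGen]
      rfl

theorem MemTruncatedPreordering.mono {m n : ℕ} {q : R[X]} (hmn : m ≤ n)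
    (hq : MemTruncatedPreordering g₁ g₂ m q) : MemTruncatedPreordering g₁ g₂ n q :=
  let ⟨σ, hσ, hdeg, hq⟩ := hq
  ⟨σ, hσ, fun i => (hdeg i).trans hmn, hq⟩

theorem MemTruncatedPreordering.of_isSumSq {n : ℕ} {s : R[X]} (hs : IsSumSq s)
    (hn : s.natDegree ≤ n) : MemTruncatedPreordering g₁ g₂ n s :=
  memTruncatedPreordering_iff.mpr ⟨s, 0, 0, 0, hs, .zero, .zero, .zero, by ring, hn,
    by simp, by simp, by simp⟩

theorem MemTruncatedPreordering.mul {m n : ℕ} {p q : R[X]}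
    (hp : MemTruncatedPreordering g₁ g₂ m p) (hq : MemTruncatedPreordering g₁ g₂ n q) :
    MemTruncatedPreordering g₁ g₂ (m + n) (p * q) := by
  obtain ⟨σ, hσ, hσdeg, rfl⟩ := hp
  obtain ⟨τ, hτ, hτdeg, rfl⟩ := hq
  set g := preorderingGen g₁ g₂
  have key : ∀ i k, σ i * g i * (τ (k - i) * g (k - i)) =
      σ i * τ (k - i) * g (i * (k - i)) ^ 2 * g k := fun i k => by
    calc σ i * g i * (τ (k - i) * g (k - i)) = σ i * τ (k - i) * (g i * g (k - i)) := by ring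
      _ = _ := by rw [preorderingGen_mul_preorderingGen, add_sub_cancel]; ring
  refine ⟨fun k => ∑ i, σ i * τ (k - i) * g (i * (k - i)) ^ 2, fun k => ?_, fun k => ?_, ?_⟩
  · exact IsSumSq.sum fun i _ => ((hσ i).mul (hτ _)).mul (IsSquare.sq _).isSumSq
  · rw [Finset.sum_mul]
    refine natDegree_sum_le_of_forall_le _ _ fun i _ => ?_
    rw [← key]
    exact natDegree_mul_le.trans (add_le_add (hσdeg i) (hτdeg _))
  · calc (∑ i, σ i * g i) * ∑ j, τ j * g j
        = ∑ i, ∑ k, σ i * g i * (τ (k - i) * g (k - i)) := by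
          rw [Finset.sum_mul_sum]
          exact Finset.sum_congr rfl fun i _ => ((Equiv.subRight i).sum_comp _).symm
      _ = ∑ k, (∑ i, σ i * τ (k - i) * g (i * (k - i)) ^ 2) * g k := by
          simp only [key, Finset.sum_mul]
          exact Finset.sum_comm

theorem MemTruncatedPreordering.mul_of_natDegree [NoZeroDivisors R] {p q : R[X]}
    (hp : MemTruncatedPreordering g₁ g₂ p.natDegree p)
    (hq : MemTruncatedPreordering g₁ g₂ q.natDegree q) (hpq : p * q ≠ 0) :
    MemTruncatedPreordering g₁ g₂ (p * q).natDegree (p * q) := by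
  rw [natDegree_mul (left_ne_zero_of_mul hpq) (right_ne_zero_of_mul hpq)]
  exact hp.mul hq

end TruncatedPreordering

theorem nonneg_on_Icc_of_nonneg_on_Ioo_of_ne {f : ℝ → ℝ} (hf : Continuous f) {a b r : ℝ}
    (hab : a < b) (h : ∀ x ∈ Ioo a b, x ≠ r → 0 ≤ f x) : ∀ x ∈ Icc a b, 0 ≤ f x := by
  have hdense : Ioo a b ⊆ closure (Ioo a b ∩ {r}ᶜ) :=
    (dense_compl_singleton r).open_subset_closure_inter isOpen_Ioo
  have hclosed : closure (Ioo a b ∩ {r}ᶜ) ⊆ {x | 0 ≤ f x} :=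
    (isClosed_le continuous_const hf).closure_subset_iff.mpr fun x hx => h x hx.1 hx.2
  rw [← closure_Ioo hab.ne]
  exact fun x hx => hclosed (closure_minimal hdense isClosed_closure hx)

theorem isSumSq_C {c : ℝ} (hc : 0 ≤ c) : IsSumSq (C c) := by
  rw [← Real.mul_self_sqrt hc, C_mul]
  exact .mul_self _

theorem exists_isRoot_or_sq_add_C_dvd {q : ℝ[X]} (hq : 0 < q.degree) :
    (∃ r, q.IsRoot r) ∨ ∃ a b : ℝ, 0 < b ∧ (X - C a) ^ 2 + C b ∣ q := by
  obtain ⟨z, hz⟩ := IsAlgClosed.exists_aeval_eq_zero ℂ q hq.ne'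
  by_cases him : z.im = 0
  · have hzre : z = algebraMap ℝ ℂ z.re := Complex.ext rfl (by simp [him])
    rw [hzre, aeval_algebraMap_apply_eq_algebraMap_eval] at hz
    exact .inl ⟨z.re, by simpa using hz⟩
  · refine .inr ⟨z.re, z.im ^ 2, by positivity, ?_⟩
    convert quadratic_dvd_of_aeval_eq_zero_im_ne_zero q hz him using 1
    rw [Complex.sq_norm, Complex.normSq_apply]
    simp only [map_add, map_mul, map_pow, map_ofNat]
    ring

theorem memTruncatedPreordering_X_sub_C {r : ℝ} (hr : r ≤ 0) :
    MemTruncatedPreordering X (1 - X) (X - C r).natDegree (X - C r) := by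
  rw [natDegree_X_sub_C]
  refine memTruncatedPreordering_iff.mpr ⟨C (-r), 1, 0, 0, isSumSq_C (neg_nonneg.mpr hr), .one,
    .zero, .zero, by rw [map_neg]; ring, by simp, by simp, by simp, by simp⟩

theorem memTruncatedPreordering_C_sub_X {r : ℝ} (hr : 1 ≤ r) :
    MemTruncatedPreordering X (1 - X) (C r - X).natDegree (C r - X) := by
  have hdeg : (C r - X).natDegree = 1 := by rw [← natDegree_neg, neg_sub, natDegree_X_sub_C]
  rw [hdeg]
  refine memTruncatedPreordering_iff.mpr ⟨C (r - 1), 0, 1, 0, isSumSq_C (sub_nonneg.mpr hr),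
    .zero, .one, .zero, by rw [map_sub, map_one]; ring, (natDegree_C _).le.trans zero_le_one,
    by simp, ?_, by simp⟩
  simpa using natDegree_sub_le (1 : ℝ[X]) X

theorem natDegree_lt_natDegree_mul {R : Type*} [Semiring R] [NoZeroDivisors R] {p q : R[X]}
    (hp : 0 < p.natDegree) (hq : q ≠ 0) : q.natDegree < (p * q).natDegree := by
  rw [natDegree_mul (ne_zero_of_natDegree_gt hp) hq]
  omega

theorem isRoot_of_nonneg_mul_X_sub_C {r : ℝ} {q : ℝ[X]} (hr : r ∈ Ioo (0 : ℝ) 1)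
    (hq : ∀ x ∈ Icc (0 : ℝ) 1, 0 ≤ (x - r) * q.eval x) : q.IsRoot r := by
  have hle : 0 ≤ -q.eval r := by
    refine nonneg_on_Icc_of_nonneg_on_Ioo_of_ne q.continuous.neg hr.1 (r := r)
      (fun x hx _ => ?_) r (right_mem_Icc.mpr hr.1.le)
    exact neg_nonneg.mpr (nonpos_of_mul_nonneg_right (hq x ⟨hx.1.le, by linarith [hx.2, hr.2]⟩)
      (by linarith [hx.2]))
  have hge : 0 ≤ q.eval r := by
    refine nonneg_on_Icc_of_nonneg_on_Ioo_of_ne q.continuous hr.2 (r := r)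
      (fun x hx _ => ?_) r (left_mem_Icc.mpr hr.2.le)
    exact nonneg_of_mul_nonneg_right (hq x ⟨by linarith [hx.1, hr.1], hx.2.le⟩)
      (by linarith [hx.1])
  exact le_antisymm (neg_nonneg.mp hle) hge

theorem memTruncatedPreordering_X_sub_C_mul {r : ℝ} {q : ℝ[X]} (hq0 : q ≠ 0)
    (hq : ∀ x ∈ Icc (0 : ℝ) 1, 0 ≤ (x - r) * q.eval x)
    (ih : ∀ p : ℝ[X], p.natDegree < ((X - C r) * q).natDegree →
      (∀ x ∈ Icc (0 : ℝ) 1, 0 ≤ p.eval x) → MemTruncatedPreordering X (1 - X) p.natDegree p) :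
    MemTruncatedPreordering X (1 - X) ((X - C r) * q).natDegree ((X - C r) * q) := by
  have hne : (X - C r) * q ≠ 0 := mul_ne_zero (X_sub_C_ne_zero r) hq0
  have hlt : q.natDegree < ((X - C r) * q).natDegree :=
    natDegree_lt_natDegree_mul (by simp) hq0
  rcases le_or_gt r 0 with hr0 | hr0
  · refine (memTruncatedPreordering_X_sub_C hr0).mul_of_natDegree (ih q hlt ?_) hne
    refine nonneg_on_Icc_of_nonneg_on_Ioo_of_ne q.continuous zero_lt_one (r := r)
      fun x hx _ => ?_
    exact nonneg_of_mul_nonneg_right (hq x (Ioo_subset_Icc_self hx)) (by linarith [hx.1])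
  rcases le_or_gt 1 r with hr1 | hr1
  · have hfac : (X - C r) * q = (C r - X) * -q := by ring
    rw [hfac] at hne ⊢
    refine (memTruncatedPreordering_C_sub_X hr1).mul_of_natDegree
      (ih (-q) (by rwa [natDegree_neg]) ?_) hne
    refine nonneg_on_Icc_of_nonneg_on_Ioo_of_ne (-q).continuous zero_lt_one (r := r)
      fun x hx _ => ?_
    rw [eval_neg]
    exact neg_nonneg.mpr (nonpos_of_mul_nonneg_right (hq x (Ioo_subset_Icc_self hx))
      (by linarith [hx.2]))
  -- an interior root has even multiplicity
  obtain ⟨q₂, rfl⟩ := dvd_iff_isRoot.mpr (isRoot_of_nonneg_mul_X_sub_C ⟨hr0, hr1⟩ hq)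
  have hfac : (X - C r) * ((X - C r) * q₂) = (X - C r) ^ 2 * q₂ := by ring
  rw [hfac] at hne ⊢
  refine (MemTruncatedPreordering.of_isSumSq (IsSquare.sq _).isSumSq le_rfl).mul_of_natDegree
    (ih q₂ ?_ ?_) hne
  · exact (natDegree_lt_natDegree_mul (by simp) (right_ne_zero_of_mul hq0)).trans hlt
  · refine nonneg_on_Icc_of_nonneg_on_Ioo_of_ne q₂.continuous zero_lt_one (r := r)
      fun x hx hxr => ?_
    have hsq : 0 < (x - r) ^ 2 := by have := sub_ne_zero.mpr hxr; positivity
    have hx' : 0 ≤ (x - r) ^ 2 * q₂.eval x := by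
      simpa [← mul_assoc, ← sq] using hq x (Ioo_subset_Icc_self hx)
    exact nonneg_of_mul_nonneg_right hx' hsq

theorem memTruncatedPreordering_sq_add_C_mul {a b : ℝ} (hb : 0 < b) {q : ℝ[X]} (hq0 : q ≠ 0)
    (hq : ∀ x ∈ Icc (0 : ℝ) 1, 0 ≤ ((x - a) ^ 2 + b) * q.eval x)
    (ih : ∀ p : ℝ[X], p.natDegree < (((X - C a) ^ 2 + C b) * q).natDegree →
      (∀ x ∈ Icc (0 : ℝ) 1, 0 ≤ p.eval x) → MemTruncatedPreordering X (1 - X) p.natDegree p) :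
    MemTruncatedPreordering X (1 - X) (((X - C a) ^ 2 + C b) * q).natDegree
      (((X - C a) ^ 2 + C b) * q) := by
  have hdeg : ((X - C a) ^ 2 + C b).natDegree = 2 := by
    rw [natDegree_add_C, natDegree_pow, natDegree_X_sub_C]
  have hsos : IsSumSq ((X - C a) ^ 2 + C b) := (IsSquare.sq _).isSumSq.add (isSumSq_C hb.le)
  refine (MemTruncatedPreordering.of_isSumSq hsos le_rfl).mul_of_natDegree
    (ih q (natDegree_lt_natDegree_mul (by omega) hq0) fun x hx => ?_)
    (mul_ne_zero (ne_zero_of_natDegree_gt (n := 0) (by omega)) hq0)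
  exact nonneg_of_mul_nonneg_right (hq x hx) (by positivity)

theorem memTruncatedPreordering_of_nonneg_on_Icc (q : ℝ[X])
    (hq : ∀ x ∈ Icc (0 : ℝ) 1, 0 ≤ q.eval x) :
    MemTruncatedPreordering X (1 - X) q.natDegree q := by
  rcases le_or_gt q.degree 0 with hdeg | hdeg
  · rw [eq_C_of_degree_le_zero hdeg] at hq ⊢
    exact .of_isSumSq (isSumSq_C (by simpa using hq 0 (by simp))) le_rfl
  have hq0 : q ≠ 0 := ne_zero_of_degree_gt hdeg
  rcases exists_isRoot_or_sq_add_C_dvd hdeg with ⟨r, hr⟩ | ⟨a, b, hb, q₁, rfl⟩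
  · obtain ⟨q₁, rfl⟩ := dvd_iff_isRoot.mpr hr
    exact memTruncatedPreordering_X_sub_C_mul (right_ne_zero_of_mul hq0) (by simpa using hq)
      fun p hlt hp => memTruncatedPreordering_of_nonneg_on_Icc p hp
  · exact memTruncatedPreordering_sq_add_C_mul hb (right_ne_zero_of_mul hq0) (by simpa using hq)
      fun p hlt hp => memTruncatedPreordering_of_nonneg_on_Icc p hp
termination_by q.natDegree
decreasing_by all_goals subst_vars; assumption

/-- a polynomial of degree at most `m` that is nonnegative on `[0,1]` has a
representation `q = σ₀ + σ₁·x + σ₂·(1-x) + σ₃·x·(1-x)` with sums of squares `σᵢ`, such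
that each of the four summands has degree at most `m`. -/
theorem statement18 (m : ℕ) (q : Polynomial ℝ) (hdeg : q.natDegree ≤ m)
    (hq : ∀ x ∈ Set.Icc (0 : ℝ) 1, 0 ≤ q.eval x) :
    ∃ σ₀ σ₁ σ₂ σ₃ : Polynomial ℝ,
      IsSumSq σ₀ ∧ IsSumSq σ₁ ∧ IsSumSq σ₂ ∧ IsSumSq σ₃ ∧
      q = σ₀ + σ₁ * X + σ₂ * (1 - X) + σ₃ * (X * (1 - X)) ∧
      σ₀.natDegree ≤ m ∧ (σ₁ * X).natDegree ≤ m ∧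
      (σ₂ * (1 - X)).natDegree ≤ m ∧ (σ₃ * (X * (1 - X))).natDegree ≤ m :=
  memTruncatedPreordering_iff.mp ((memTruncatedPreordering_of_nonneg_on_Icc q hq).mono hdeg)
end
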